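/- arXiv:2207.11074 — 10 statements merged into one kernel-verified Lean document; each statement's English description precedes it below -/
import Mathlib

section
/- (Maximum principle for the steady aging equation.) Let H > 0, κ > 0, θ∞ > 0, let g : [−H,H] → [0,∞) be continuous, let f1 : ℝ → ℝ be continuous, nonnegative and nondecreasing with f1(0) = 0, and let f0 : ℝ → ℝ be continuous and strictly decreasing with f0(θ∞) = 0. If θ : [−H,H] → ℝ is twice continuously differentiable, satisfies κ θ''(x) = g(x) f1(θ(x)) − f0(θ(x)) for every x ∈ (−H,H), and θ(−H) = θ(H) = θ∞, then 0 ≤ θ(x) ≤ θ∞ for every x ∈ [−H,H]. -/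
/-!
Where `θ > θ∞` the equation gives `κ θ'' ≥ -f0(θ) > 0`, and where `θ < 0` it gives
`κ θ'' ≤ -f0(θ) < 0` because `f1(θ) ≤ f1(0) = 0`. So `θ` cannot have an interior maximum above
`θ∞` nor an interior minimum below `0`, and the boundary values lie in `[0, θ∞]`.
-/

open Set Filter Topology

/-- If `deriv (deriv f) x > 0`, the second-derivative test makes `x` a local minimum as well,
so `f` is locally constant near `x` and `deriv (deriv f) x = 0`. -/
theorem IsLocalMax.deriv_deriv_nonpos {f : ℝ → ℝ} {x : ℝ} (hmax : IsLocalMax f x)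
    (hf : ContinuousAt f x) : deriv (deriv f) x ≤ 0 := by
  by_contra! hpos
  have hmin : IsLocalMin f x := isLocalMin_of_deriv_deriv_pos hpos hmax.deriv_eq_zero hf
  have hconst : f =ᶠ[𝓝 x] fun _ => f x :=
    (hmax.and hmin).mono fun _ h => le_antisymm h.1 h.2
  have hderiv : deriv f =ᶠ[𝓝 x] fun _ => 0 := by
    simpa using hconst.deriv
  simp [hderiv.deriv_eq] at hpos

theorem le_on_Icc_of_deriv_deriv_pos {a b c : ℝ} {φ : ℝ → ℝ} (hφ : ContinuousOn φ (Icc a b))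
    (hconvex : ∀ x ∈ Ioo a b, c < φ x → 0 < deriv (deriv φ) x)
    (ha : φ a ≤ c) (hb : φ b ≤ c) : ∀ x ∈ Icc a b, φ x ≤ c := by
  rcases (Icc a b).eq_empty_or_nonempty with hempty | hne
  · simp [hempty]
  obtain ⟨x₀, hx₀, hmax⟩ := isCompact_Icc.exists_isMaxOn hne hφ
  suffices φ x₀ ≤ c from fun x hx => (hmax hx).trans this
  by_contra! hgt
  have hx₀' : x₀ ∈ Ioo a b := by
    refine ⟨hx₀.1.lt_of_ne ?_, hx₀.2.lt_of_ne ?_⟩ <;> rintro rfl <;> linarith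
  have hnhds : Icc a b ∈ 𝓝 x₀ := Icc_mem_nhds hx₀'.1 hx₀'.2
  exact (hconvex x₀ hx₀' hgt).not_ge
    ((hmax.isLocalMax hnhds).deriv_deriv_nonpos (hφ.continuousAt hnhds))

theorem le_on_Icc_of_deriv_deriv_neg {a b c : ℝ} {φ : ℝ → ℝ} (hφ : ContinuousOn φ (Icc a b))
    (hconcave : ∀ x ∈ Ioo a b, φ x < c → deriv (deriv φ) x < 0)
    (ha : c ≤ φ a) (hb : c ≤ φ b) : ∀ x ∈ Icc a b, c ≤ φ x := by
  have hneg := le_on_Icc_of_deriv_deriv_pos (c := -c) (φ := fun y => -φ y) hφ.neg (fun x hx hlt => by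
    simpa [deriv.fun_neg'] using hconcave x hx (by linarith)) (by linarith) (by linarith)
  exact fun x hx => by linarith [hneg x hx]

theorem derivWithin_derivWithin_Icc_eq {a b x : ℝ} (f : ℝ → ℝ) (hx : x ∈ Ioo a b) :
    derivWithin (derivWithin f (Icc a b)) (Icc a b) x = deriv (deriv f) x := by
  have hfirst : derivWithin f (Icc a b) =ᶠ[𝓝 x] deriv f := by
    filter_upwards [Ioo_mem_nhds hx.1 hx.2] with y hy
    exact derivWithin_of_mem_nhds (Icc_mem_nhds hy.1 hy.2)
  rw [(hfirst.filter_mono nhdsWithin_le_nhds).derivWithin_eq hfirst.self_of_nhds,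
    derivWithin_of_mem_nhds (Icc_mem_nhds hx.1 hx.2)]

theorem aging_maximum_principle_general
    (H κ θinf : ℝ) (hκ : 0 < κ) (hθinf : 0 < θinf)
    (g f0 f1 θ : ℝ → ℝ)
    (hgnn : ∀ x ∈ Set.Icc (-H) H, 0 ≤ g x)
    (hf1nn : ∀ t, 0 ≤ f1 t)
    (hf1mono : Monotone f1) (hf10 : f1 0 = 0)
    (hf0anti : StrictAnti f0) (hf0inf : f0 θinf = 0)
    (hθ : ContDiffOn ℝ 2 θ (Set.Icc (-H) H))
    (heq : ∀ x ∈ Set.Ioo (-H) H,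
      κ * derivWithin (derivWithin θ (Set.Icc (-H) H)) (Set.Icc (-H) H) x
        = g x * f1 (θ x) - f0 (θ x))
    (hbcl : θ (-H) = θinf) (hbcr : θ H = θinf) :
    ∀ x ∈ Set.Icc (-H) H, 0 ≤ θ x ∧ θ x ≤ θinf := by
  have hode : ∀ x ∈ Ioo (-H) H, κ * deriv (deriv θ) x = g x * f1 (θ x) - f0 (θ x) :=
    fun x hx => derivWithin_derivWithin_Icc_eq θ hx ▸ heq x hx
  have hconvex : ∀ x ∈ Ioo (-H) H, θinf < θ x → 0 < deriv (deriv θ) x := by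
    intro x hx hgt
    have hf0 : f0 (θ x) < 0 := hf0inf ▸ hf0anti hgt
    have hsource : 0 ≤ g x * f1 (θ x) := mul_nonneg (hgnn x (Ioo_subset_Icc_self hx)) (hf1nn _)
    exact pos_of_mul_pos_right (a := κ) (by linarith [hode x hx]) hκ.le
  have hconcave : ∀ x ∈ Ioo (-H) H, θ x < 0 → deriv (deriv θ) x < 0 := by
    intro x hx hneg
    have hf0 : 0 < f0 (θ x) := hf0inf ▸ hf0anti (hneg.trans hθinf)
    have hsource : g x * f1 (θ x) ≤ 0 :=
      mul_nonpos_of_nonneg_of_nonpos (hgnn x (Ioo_subset_Icc_self hx)) (hf10 ▸ hf1mono hneg.le)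
    exact neg_of_mul_neg_right (a := κ) (by linarith [hode x hx]) hκ.le
  intro x hx
  exact ⟨le_on_Icc_of_deriv_deriv_neg hθ.continuousOn hconcave (by linarith) (by linarith) x hx,
    le_on_Icc_of_deriv_deriv_pos hθ.continuousOn hconvex hbcl.le hbcr.le x hx⟩

/-- maximum principle for the steady aging equation.
If `θ` is `C²` on `[-H,H]`, solves `κ θ'' = g f1(θ) - f0(θ)` on `(-H,H)` and
has boundary values `θ(±H) = θ∞`, where `g ≥ 0` is continuous, `f1` is
continuous, nonnegative and nondecreasing with `f1(0) = 0`, and `f0` is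
continuous and strictly decreasing with `f0(θ∞) = 0`, then
`0 ≤ θ ≤ θ∞` on `[-H,H]`. -/
theorem aging_maximum_principle
    (H κ θinf : ℝ) (hH : 0 < H) (hκ : 0 < κ) (hθinf : 0 < θinf)
    (g f0 f1 θ : ℝ → ℝ)
    (hgc : ContinuousOn g (Set.Icc (-H) H))
    (hgnn : ∀ x ∈ Set.Icc (-H) H, 0 ≤ g x)
    (hf1c : Continuous f1) (hf1nn : ∀ t, 0 ≤ f1 t)
    (hf1mono : Monotone f1) (hf10 : f1 0 = 0)
    (hf0c : Continuous f0) (hf0anti : StrictAnti f0) (hf0inf : f0 θinf = 0)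
    (hθ : ContDiffOn ℝ 2 θ (Set.Icc (-H) H))
    (heq : ∀ x ∈ Set.Ioo (-H) H,
      κ * derivWithin (derivWithin θ (Set.Icc (-H) H)) (Set.Icc (-H) H) x
        = g x * f1 (θ x) - f0 (θ x))
    (hbcl : θ (-H) = θinf) (hbcr : θ H = θinf) :
    ∀ x ∈ Set.Icc (-H) H, 0 ≤ θ x ∧ θ x ≤ θinf :=
  aging_maximum_principle_general H κ θinf hκ hθinf g f0 f1 θ hgnn hf1nn hf1mono hf10 hf0anti hf0inf
    hθ heq hbcl hbcr
end

section
/- (Well-posedness and continuity of the inverse plastic flow map Π.) Let μ : ℝ² → ℝ be continuous and such that for every θ ∈ ℝ: the map π ↦ μ(π,θ) is strictly increasing on [0,∞) and strictly decreasing on (−∞,0], μ(0,θ) > 0, and μ(π,θ) → +∞ both as π → +∞ and as π → −∞. Then for every (σ, θ) ∈ ℝ² there exists a unique π ∈ ℝ for which there is ξ ∈ Sign(π) with σ = μ(π,θ)·ξ; and the resulting map Π : ℝ² → ℝ, Π(σ,θ) := this unique π, is continuous. -/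
/-!
For fixed `θ` write `f = μ(·, θ)`. The set `f p · Sign(p)` is the interval
`[signMulLower f p, signMulUpper f p]`: the point `±f p` for `p ≠ 0` and `[-f 0, f 0]` for
`p = 0`. Since `f` decreases to its minimum `f 0 ≥ 0` and then increases, these intervals are
strictly increasing in `p` (`signMulUpper f p < signMulLower f q` for `p < q`), which gives
uniqueness, and coercivity plus the intermediate value theorem give existence. Strict
monotonicity also identifies the preimages of open rays under `Π`:
`Π(σ, θ) < r ↔ σ < signMulLower (μ(·, θ)) r` and
`r < Π(σ, θ) ↔ signMulUpper (μ(·, θ)) r < σ`, and both endpoints depend continuously on `θ`,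
so these preimages are open.
-/

open MeasureTheory Set Filter

noncomputable section

/-- The set-valued sign function. -/
def SignSet (p : ℝ) : Set ℝ :=
  if 0 < p then {1} else if p < 0 then {-1} else Set.Icc (-1) 1

def signMulLower (f : ℝ → ℝ) (p : ℝ) : ℝ := if 0 < p then f p else -f p

def signMulUpper (f : ℝ → ℝ) (p : ℝ) : ℝ := if p < 0 then -f p else f p

section SignMul

variable {f : ℝ → ℝ} {p q σ : ℝ}

theorem exists_mem_signSet_eq_mul_iff (h0 : 0 ≤ f 0) :
    (∃ ξ ∈ SignSet p, σ = f p * ξ) ↔ σ ∈ Icc (signMulLower f p) (signMulUpper f p) := by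
  have hmem : (∃ ξ ∈ SignSet p, σ = f p * ξ) ↔ σ ∈ (f p * ·) '' SignSet p := by
    simp only [mem_image, eq_comm]
  rw [hmem]
  rcases lt_trichotomy p 0 with hp | rfl | hp
  · simp [SignSet, signMulLower, signMulUpper, hp, hp.not_gt]
  · rw [SignSet, if_neg (lt_irrefl 0), if_neg (lt_irrefl 0),
      image_mul_left_Icc h0 (by norm_num)]
    simp [signMulLower, signMulUpper]
  · simp [SignSet, signMulLower, signMulUpper, hp, hp.not_gt]

theorem signMulLower_le_signMulUpper (h0 : 0 ≤ f 0) (p : ℝ) :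
    signMulLower f p ≤ signMulUpper f p := by
  unfold signMulLower signMulUpper
  split_ifs with hpos hneg hneg
  · linarith
  · exact le_rfl
  · exact le_rfl
  · obtain rfl : p = 0 := le_antisymm (not_lt.mp hpos) (not_lt.mp hneg)
    linarith

theorem signMulUpper_lt_signMulLower (hmono : StrictMonoOn f (Ici 0))
    (hanti : StrictAntiOn f (Iic 0)) (h0 : 0 ≤ f 0) (hpq : p < q) :
    signMulUpper f p < signMulLower f q := by
  have hmin_pos : ∀ {r}, 0 < r → f 0 < f r := fun hr => hmono self_mem_Ici hr.le hr
  have hmin_neg : ∀ {r}, r < 0 → f 0 < f r := fun hr => hanti hr.le self_mem_Iic hr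
  unfold signMulUpper signMulLower
  split_ifs with hp hq hq
  · linarith [hmin_neg hp, hmin_pos hq]
  · exact neg_lt_neg (hanti hp.le (not_lt.mp hq) hpq)
  · exact hmono (not_lt.mp hp) hq.le hpq
  · linarith

theorem strictMono_signMulLower (hmono : StrictMonoOn f (Ici 0))
    (hanti : StrictAntiOn f (Iic 0)) (h0 : 0 ≤ f 0) : StrictMono (signMulLower f) :=
  fun _ _ hpq =>
    (signMulLower_le_signMulUpper h0 _).trans_lt (signMulUpper_lt_signMulLower hmono hanti h0 hpq)

theorem strictMono_signMulUpper (hmono : StrictMonoOn f (Ici 0))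
    (hanti : StrictAntiOn f (Iic 0)) (h0 : 0 ≤ f 0) : StrictMono (signMulUpper f) :=
  fun _ _ hpq =>
    (signMulUpper_lt_signMulLower hmono hanti h0 hpq).trans_le (signMulLower_le_signMulUpper h0 _)

theorem exists_mem_Icc_signMulLower_signMulUpper (hf : Continuous f)
    (htop : Tendsto f atTop atTop) (hbot : Tendsto f atBot atTop) (σ : ℝ) :
    ∃ p, σ ∈ Icc (signMulLower f p) (signMulUpper f p) := by
  by_cases hσ_pos : f 0 < σ
  · obtain ⟨p, hp, rfl⟩ := intermediate_value_Ioi hf.continuousOn htop hσ_pos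
    exact ⟨p, by simp [signMulLower, signMulUpper, mem_Ioi.mp hp, (mem_Ioi.mp hp).not_gt]⟩
  by_cases hσ_neg : σ < -f 0
  · obtain ⟨p, hp, hfp⟩ :=
      intermediate_value_Iio' hf.continuousOn hbot (show f 0 < -σ by linarith)
    refine ⟨p, ?_⟩
    simp [signMulLower, signMulUpper, mem_Iio.mp hp, (mem_Iio.mp hp).not_gt, hfp]
  · refine ⟨0, ?_, ?_⟩ <;> simp only [signMulLower, signMulUpper, lt_irrefl, if_false] <;>
      linarith

theorem lt_iff_lt_signMulLower (hmono : StrictMonoOn f (Ici 0))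
    (hanti : StrictAntiOn f (Iic 0)) (h0 : 0 ≤ f 0)
    (hp : σ ∈ Icc (signMulLower f p) (signMulUpper f p)) (r : ℝ) :
    p < r ↔ σ < signMulLower f r := by
  refine ⟨fun hpr => hp.2.trans_lt (signMulUpper_lt_signMulLower hmono hanti h0 hpr), ?_⟩
  contrapose!
  exact fun hrp => ((strictMono_signMulLower hmono hanti h0).monotone hrp).trans hp.1

theorem lt_iff_signMulUpper_lt (hmono : StrictMonoOn f (Ici 0))
    (hanti : StrictAntiOn f (Iic 0)) (h0 : 0 ≤ f 0)
    (hp : σ ∈ Icc (signMulLower f p) (signMulUpper f p)) (r : ℝ) :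
    r < p ↔ signMulUpper f r < σ := by
  refine ⟨fun hrp => (signMulUpper_lt_signMulLower hmono hanti h0 hrp).trans_le hp.1, ?_⟩
  contrapose!
  exact fun hpr => hp.2.trans ((strictMono_signMulUpper hmono hanti h0).monotone hpr)

theorem eq_of_mem_Icc_signMulLower_signMulUpper (hmono : StrictMonoOn f (Ici 0))
    (hanti : StrictAntiOn f (Iic 0)) (h0 : 0 ≤ f 0)
    (hp : σ ∈ Icc (signMulLower f p) (signMulUpper f p))
    (hq : σ ∈ Icc (signMulLower f q) (signMulUpper f q)) : p = q :=
  le_antisymm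
    (not_lt.mp fun hqp => ((lt_iff_lt_signMulLower hmono hanti h0 hq p).mp hqp).not_ge hp.1)
    (not_lt.mp fun hpq => ((lt_iff_lt_signMulLower hmono hanti h0 hp q).mp hpq).not_ge hq.1)

end SignMul

section Continuity

variable {X : Type*} [TopologicalSpace X] {f : X → ℝ → ℝ}

theorem continuous_signMulLower_apply {r : ℝ} (hf : Continuous fun x => f x r) :
    Continuous fun x => signMulLower (f x) r := by
  unfold signMulLower
  split_ifs
  exacts [hf, hf.neg]

theorem continuous_signMulUpper_apply {r : ℝ} (hf : Continuous fun x => f x r) :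
    Continuous fun x => signMulUpper (f x) r := by
  unfold signMulUpper
  split_ifs
  exacts [hf.neg, hf]

theorem continuous_of_mem_Icc_signMulLower_signMulUpper {σ P : X → ℝ} (hσ : Continuous σ)
    (hf : ∀ r, Continuous fun x => f x r) (hmono : ∀ x, StrictMonoOn (f x) (Ici 0))
    (hanti : ∀ x, StrictAntiOn (f x) (Iic 0)) (h0 : ∀ x, 0 ≤ f x 0)
    (hP : ∀ x, σ x ∈ Icc (signMulLower (f x) (P x)) (signMulUpper (f x) (P x))) :
    Continuous P := by
  refine OrderTopology.continuous_iff.mpr fun r => ⟨?_, ?_⟩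
  · have hpre : P ⁻¹' Ioi r = {x | signMulUpper (f x) r < σ x} :=
      ext fun x => lt_iff_signMulUpper_lt (hmono x) (hanti x) (h0 x) (hP x) r
    exact hpre ▸ isOpen_lt (continuous_signMulUpper_apply (hf r)) hσ
  · have hpre : P ⁻¹' Iio r = {x | σ x < signMulLower (f x) r} :=
      ext fun x => lt_iff_lt_signMulLower (hmono x) (hanti x) (h0 x) (hP x) r
    exact hpre ▸ isOpen_lt hσ (continuous_signMulLower_apply (hf r))

end Continuity

/-- well-posedness and continuity of the inverse plastic flow
map `Π`.  If `μ` is continuous, `π ↦ μ(π,θ)` is strictly increasing on `[0,∞)`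
and strictly decreasing on `(-∞,0]` with `μ(0,θ) > 0` and `μ(π,θ) → ∞` as
`π → ±∞`, then for each `(σ,θ)` there is a unique `π` with
`σ ∈ μ(π,θ)·Sign(π)`, and the resulting map `(σ,θ) ↦ π` is continuous. -/
theorem inverse_flow_map_wellposed
    (μ : ℝ → ℝ → ℝ)
    (hcont : Continuous (fun q : ℝ × ℝ => μ q.1 q.2))
    (hmono : ∀ t, StrictMonoOn (fun p => μ p t) (Set.Ici (0:ℝ)))
    (hanti : ∀ t, StrictAntiOn (fun p => μ p t) (Set.Iic (0:ℝ)))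
    (hpos : ∀ t, 0 < μ 0 t)
    (htop : ∀ t, Tendsto (fun p => μ p t) atTop atTop)
    (hbot : ∀ t, Tendsto (fun p => μ p t) atBot atTop) :
    (∀ σ t : ℝ, ∃! p : ℝ, ∃ ξ ∈ SignSet p, σ = μ p t * ξ) ∧
    ∃ Pmap : ℝ → ℝ → ℝ,
      Continuous (fun q : ℝ × ℝ => Pmap q.1 q.2) ∧
      ∀ σ t : ℝ, ∃ ξ ∈ SignSet (Pmap σ t), σ = μ (Pmap σ t) t * ξ := by
  have hgraph : ∀ σ t p, (∃ ξ ∈ SignSet p, σ = μ p t * ξ) ↔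
      σ ∈ Icc (signMulLower (μ · t) p) (signMulUpper (μ · t) p) :=
    fun σ t p => exists_mem_signSet_eq_mul_iff (f := (μ · t)) (hpos t).le
  have hexists : ∀ σ t, ∃ p, σ ∈ Icc (signMulLower (μ · t) p) (signMulUpper (μ · t) p) :=
    fun σ t => exists_mem_Icc_signMulLower_signMulUpper
      (hcont.comp (continuous_id.prodMk continuous_const)) (htop t) (hbot t) σ
  choose Pmap hPmap using hexists
  refine ⟨fun σ t => ⟨Pmap σ t, (hgraph σ t _).mpr (hPmap σ t), fun p hp => ?_⟩,
    Pmap, ?_, fun σ t => (hgraph σ t _).mpr (hPmap σ t)⟩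
  · exact eq_of_mem_Icc_signMulLower_signMulUpper (hmono t) (hanti t) (hpos t).le
      ((hgraph σ t p).mp hp) (hPmap σ t)
  · exact continuous_of_mem_Icc_signMulLower_signMulUpper (f := fun q p => μ p q.2)
      continuous_fst (fun r => hcont.comp (continuous_const.prodMk continuous_snd))
      (fun q => hmono q.2) (fun q => hanti q.2) (fun q => (hpos q.2).le)
      (fun q => hPmap q.1 q.2)
end
end

section
/- (Well-posedness of the steady aging map Θ_f.) Let θ∞ > 0, let f0 : ℝ → ℝ be continuous and strictly decreasing with f0(θ∞) = 0, and let f1 : ℝ → ℝ be continuous and strictly increasing with f1(0) = 0. Then for every π ≥ 0 there exists a unique θ ∈ ℝ with f0(θ) = π·f1(θ); this θ lies in the interval (0, θ∞]. The resulting map Θ_f : [0,∞) → ℝ satisfies Θ_f(0) = θ∞ and is strictly decreasing on [0,∞). -/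
/-!
For `p ≥ 0` the function `θ ↦ f0 θ - p * f1 θ` is continuous and strictly decreasing, positive at
`0` (as `f0 0 > f0 θ∞ = 0`) and non-positive at `θ∞`, so it has exactly one zero, which lies in
`(0, θ∞]`. If `p < q` and `Θ q ≥ Θ p` then
`q * f1 (Θ q) = f0 (Θ q) ≤ f0 (Θ p) = p * f1 (Θ p) ≤ p * f1 (Θ q)`, impossible since `f1 (Θ q) > 0`.
-/

open Set

open Classical in
/-- The map `Θ_f`; the value `θinf` is a junk value, taken when no balance point exists in
`(0, θinf]`. -/
noncomputable def steadyAgingMap (θinf : ℝ) (f0 f1 : ℝ → ℝ) (p : ℝ) : ℝ :=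
  if h : ∃ θ ∈ Ioc 0 θinf, f0 θ = p * f1 θ then h.choose else θinf

theorem steadyAgingMap_spec {θinf p : ℝ} {f0 f1 : ℝ → ℝ}
    (h : ∃ θ ∈ Ioc 0 θinf, f0 θ = p * f1 θ) :
    steadyAgingMap θinf f0 f1 p ∈ Ioc 0 θinf ∧
      f0 (steadyAgingMap θinf f0 f1 p) = p * f1 (steadyAgingMap θinf f0 f1 p) := by
  rw [steadyAgingMap, dif_pos h]
  exact h.choose_spec

section Balance

variable {f0 f1 : ℝ → ℝ} {p q s t : ℝ}

theorem strictAnti_sub_const_mul (hf0 : StrictAnti f0) (hf1 : Monotone f1) (hp : 0 ≤ p) :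
    StrictAnti fun θ => f0 θ - p * f1 θ := fun a b hab => by
  have := mul_le_mul_of_nonneg_left (hf1 hab.le) hp
  have := hf0 hab
  dsimp only
  linarith

theorem eq_of_balance (hf0 : StrictAnti f0) (hf1 : Monotone f1) (hp : 0 ≤ p)
    (hs : f0 s = p * f1 s) (ht : f0 t = p * f1 t) : s = t :=
  (strictAnti_sub_const_mul hf0 hf1 hp).injective <| by simp only [hs, ht, sub_self]

theorem exists_balance_mem_Ioc {θinf : ℝ} (hθinf : 0 < θinf) (hf0c : Continuous f0)
    (hf0 : StrictAnti f0) (hf00 : f0 θinf = 0) (hf1c : Continuous f1) (hf1 : StrictMono f1)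
    (hf10 : f1 0 = 0) (hp : 0 ≤ p) : ∃ θ ∈ Ioc 0 θinf, f0 θ = p * f1 θ := by
  have hpos_at_zero : 0 < f0 0 - p * f1 0 := by
    have := hf0 hθinf
    rw [hf10, mul_zero, sub_zero]
    linarith
  have hnonpos_at_θinf : f0 θinf - p * f1 θinf ≤ 0 := by
    have := mul_le_mul_of_nonneg_left (hf10 ▸ hf1 hθinf).le hp
    linarith
  obtain ⟨θ, hθ, hzero⟩ := intermediate_value_Ioc' hθinf.le
    (hf0c.sub (continuous_const.mul hf1c)).continuousOn ⟨hnonpos_at_θinf, hpos_at_zero⟩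
  exact ⟨θ, hθ, sub_eq_zero.mp hzero⟩

theorem balance_lt_of_lt (hf0 : Antitone f0) (hf1 : Monotone f1) (hp : 0 ≤ p) (hpq : p < q)
    (ht_pos : 0 < f1 t) (hs : f0 s = p * f1 s) (ht : f0 t = q * f1 t) : t < s := by
  by_contra! hst
  have := mul_le_mul_of_nonneg_left (hf1 hst) hp
  have := hf0 hst
  have := mul_lt_mul_of_pos_right hpq ht_pos
  linarith

end Balance

/-- well-posedness of the steady aging map `Θ_f`.
If `f0` is continuous and strictly decreasing with `f0(θ∞) = 0` and `f1` is
continuous and strictly increasing with `f1(0) = 0`, then for every `π ≥ 0`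
there is a unique `θ` with `f0(θ) = π·f1(θ)`; it lies in `(0, θ∞]`.  The
resulting map `Θ_f` satisfies `Θ_f(0) = θ∞` and is strictly decreasing on
`[0,∞)`. -/
theorem steady_aging_map_wellposed
    (θinf : ℝ) (hθinf : 0 < θinf) (f0 f1 : ℝ → ℝ)
    (hf0c : Continuous f0) (hf0anti : StrictAnti f0) (hf00 : f0 θinf = 0)
    (hf1c : Continuous f1) (hf1mono : StrictMono f1) (hf10 : f1 0 = 0) :
    ∃ Θf : ℝ → ℝ,
      (∀ p, 0 ≤ p → f0 (Θf p) = p * f1 (Θf p)) ∧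
      (∀ p, 0 ≤ p → ∀ t : ℝ, f0 t = p * f1 t → t = Θf p) ∧
      (∀ p, 0 ≤ p → 0 < Θf p ∧ Θf p ≤ θinf) ∧
      Θf 0 = θinf ∧
      StrictAntiOn Θf (Set.Ici 0) := by
  have hspec (p : ℝ) (hp : 0 ≤ p) := steadyAgingMap_spec
    (exists_balance_mem_Ioc hθinf hf0c hf0anti hf00 hf1c hf1mono hf10 hp)
  have huniq (p : ℝ) (hp : 0 ≤ p) (t : ℝ) (ht : f0 t = p * f1 t) :
      t = steadyAgingMap θinf f0 f1 p :=
    eq_of_balance hf0anti hf1mono.monotone hp ht (hspec p hp).2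
  refine ⟨steadyAgingMap θinf f0 f1, fun p hp => (hspec p hp).2, huniq,
    fun p hp => (hspec p hp).1, (huniq 0 le_rfl θinf (by rw [hf00, zero_mul])).symm, ?_⟩
  intro p hp q hq hpq
  have hf1_pos : 0 < f1 (steadyAgingMap θinf f0 f1 q) := hf10 ▸ hf1mono (hspec q hq).1.1
  exact balance_lt_of_lt hf0anti.antitone hf1mono.monotone hp hpq hf1_pos (hspec p hp).2
    (hspec q hq).2
end

section
/- (Existence and uniqueness of the critical plastic rate π*.) Let π∘ > 0 and let μ̃ : [0,∞) → (0,∞) be continuous, strictly decreasing on [0, π∘], strictly increasing on [π∘, ∞), and satisfy μ̃(π) → ∞ as π → ∞. Then there exists a unique π* > π∘ such that ∫₀^{π*} μ̃(s) ds = π*·μ̃(π*). -/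
open MeasureTheory Set Filter

noncomputable section

/-!
Put `F p = ∫₀^p μ̃ - p μ̃(p)`. Since `μ̃` decreases strictly on `[0, π∘]`, `F π∘ > 0`.
On `[π∘, ∞)` the increase of `μ̃` gives `∫ₐᵇ μ̃ < (b - a) μ̃(b)`, hence
`F b < F a + a (μ̃(a) - μ̃(b))`: so `F` is strictly decreasing there, and it becomes negative
once `μ̃(b)` exceeds `μ̃(π∘) + F π∘ / π∘`. The intermediate value theorem gives a zero of `F`
beyond `π∘`, and monotonicity makes it unique.
-/

theorem intervalIntegral_lt_sub_mul {f : ℝ → ℝ} {a b c : ℝ} (hab : a < b)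
    (hf : IntervalIntegrable f volume a b) (hlt : ∀ x ∈ Ioo a b, f x < c) :
    ∫ x in a..b, f x < (b - a) * c := by
  have hpos : 0 < ∫ x in a..b, (c - f x) :=
    intervalIntegral.intervalIntegral_pos_of_pos_on (intervalIntegrable_const.sub hf)
      (fun x hx => sub_pos.2 (hlt x hx)) hab
  rw [intervalIntegral.integral_sub intervalIntegrable_const hf, intervalIntegral.integral_const,
    smul_eq_mul] at hpos
  linarith

theorem sub_mul_lt_intervalIntegral {f : ℝ → ℝ} {a b c : ℝ} (hab : a < b)
    (hf : IntervalIntegrable f volume a b) (hlt : ∀ x ∈ Ioo a b, c < f x) :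
    (b - a) * c < ∫ x in a..b, f x := by
  have h := intervalIntegral_lt_sub_mul (f := fun x => -f x) (c := -c) hab hf.neg
    (fun x hx => neg_lt_neg (hlt x hx))
  rw [intervalIntegral.integral_neg] at h
  linarith

def primitiveGap (f : ℝ → ℝ) (p : ℝ) : ℝ :=
  (∫ s in (0 : ℝ)..p, f s) - p * f p

theorem primitiveGap_eq_zero_iff {f : ℝ → ℝ} {p : ℝ} :
    primitiveGap f p = 0 ↔ (∫ s in (0 : ℝ)..p, f s) = p * f p :=
  sub_eq_zero

theorem primitiveGap_continuousOn {f : ℝ → ℝ} {b : ℝ} (hb : 0 ≤ b)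
    (hf : ContinuousOn f (Icc 0 b)) :
    ContinuousOn (primitiveGap f) (Icc 0 b) :=
  ((intervalIntegral.continuousOn_primitive_interval' (hf.intervalIntegrable_of_Icc hb)
    left_mem_uIcc).mono Icc_subset_uIcc).sub (continuousOn_id.mul hf)

theorem primitiveGap_pos {f : ℝ → ℝ} {a : ℝ} (ha : 0 < a) (hf : ContinuousOn f (Icc 0 a))
    (hanti : StrictAntiOn f (Icc 0 a)) : 0 < primitiveGap f a := by
  have hint : IntervalIntegrable f volume 0 a := hf.intervalIntegrable_of_Icc ha.le
  have := sub_mul_lt_intervalIntegral (c := f a) ha hint fun x hx =>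
    hanti ⟨hx.1.le, hx.2.le⟩ (right_mem_Icc.2 ha.le) hx.2
  rw [primitiveGap]
  linarith

theorem primitiveGap_lt {f : ℝ → ℝ} {a b : ℝ} (ha : 0 ≤ a) (hab : a < b)
    (hf : ContinuousOn f (Icc 0 b)) (hmono : StrictMonoOn f (Icc a b)) :
    primitiveGap f b < primitiveGap f a + a * (f a - f b) := by
  have hint : ∀ c ∈ Icc 0 b, ∀ d ∈ Icc 0 b, IntervalIntegrable f volume c d :=
    fun c hc d hd => (hf.mono (uIcc_subset_Icc hc hd)).intervalIntegrable
  have hb : b ∈ Icc 0 b := ⟨ha.trans hab.le, le_rfl⟩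
  have ha' : a ∈ Icc 0 b := ⟨ha, hab.le⟩
  have hsplit := intervalIntegral.integral_add_adjacent_intervals
    (hint 0 (left_mem_Icc.2 hb.1) a ha') (hint a ha' b hb)
  have hlt := intervalIntegral_lt_sub_mul (c := f b) hab (hint a ha' b hb) fun x hx =>
    hmono (Ioo_subset_Icc_self hx) (right_mem_Icc.2 hab.le) hx.2
  rw [primitiveGap, primitiveGap, ← hsplit]
  linarith

theorem primitiveGap_strictAntiOn {f : ℝ → ℝ} {p : ℝ} (hp : 0 ≤ p)
    (hf : ContinuousOn f (Ici 0)) (hmono : StrictMonoOn f (Ici p)) :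
    StrictAntiOn (primitiveGap f) (Ici p) := by
  intro a ha b hb hab
  have ha0 : 0 ≤ a := hp.trans ha
  have hlt := primitiveGap_lt ha0 hab (hf.mono Icc_subset_Ici_self)
    (hmono.mono (Icc_subset_Ici_iff hab.le |>.2 ha))
  have hle : a * (f a - f b) ≤ 0 :=
    mul_nonpos_of_nonneg_of_nonpos ha0 (sub_nonpos.2 (hmono ha hb hab).le)
  linarith

theorem exists_primitiveGap_neg {f : ℝ → ℝ} {p : ℝ} (hp : 0 < p)
    (hf : ContinuousOn f (Ici 0)) (hmono : StrictMonoOn f (Ici p))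
    (htop : Tendsto f atTop atTop) : ∃ b, p < b ∧ primitiveGap f b < 0 := by
  obtain ⟨b, hbf, hpb⟩ := ((htop.eventually_ge_atTop (f p + primitiveGap f p / p)).and
    (eventually_gt_atTop p)).exists
  have hlt := primitiveGap_lt hp.le hpb (hf.mono Icc_subset_Ici_self)
    (hmono.mono (Icc_subset_Ici_iff hpb.le |>.2 le_rfl))
  have hle : primitiveGap f p ≤ p * (f b - f p) := by
    rw [← div_le_iff₀' hp]
    linarith
  exact ⟨b, hpb, by linarith⟩

theorem critical_plastic_rate_exists_unique_general
    (pc : ℝ) (hpc : 0 < pc) (mu : ℝ → ℝ)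
    (hc : ContinuousOn mu (Set.Ici 0))
    (hanti : StrictAntiOn mu (Set.Icc 0 pc))
    (hmono : StrictMonoOn mu (Set.Ici pc))
    (htop : Tendsto mu atTop atTop) :
    ∃! ps : ℝ, pc < ps ∧ (∫ s in (0:ℝ)..ps, mu s) = ps * mu ps := by
  have hgap_pc : 0 < primitiveGap mu pc :=
    primitiveGap_pos hpc (hc.mono Icc_subset_Ici_self) hanti
  obtain ⟨b, hpcb, hgap_b⟩ := exists_primitiveGap_neg hpc hc hmono htop
  have hcont : ContinuousOn (primitiveGap mu) (Icc pc b) :=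
    (primitiveGap_continuousOn (hpc.trans hpcb).le (hc.mono Icc_subset_Ici_self)).mono
      (Icc_subset_Icc_left hpc.le)
  obtain ⟨ps, hps, hzero⟩ :=
    intermediate_value_Ioo' hpcb.le hcont ⟨hgap_b, hgap_pc⟩
  refine ⟨ps, ⟨hps.1, primitiveGap_eq_zero_iff.1 hzero⟩, fun q ⟨hq, hq_eq⟩ => ?_⟩
  exact (primitiveGap_strictAntiOn hpc.le hc hmono).injOn hq.le hps.1.le
    ((primitiveGap_eq_zero_iff.2 hq_eq).trans hzero.symm)

/-- existence and uniqueness of the critical plastic rate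
`π*`.  If `μ̃ : [0,∞) → (0,∞)` is continuous, strictly decreasing on
`[0, π∘]`, strictly increasing on `[π∘, ∞)` and tends to `∞`, then there is a
unique `π* > π∘` with `∫₀^{π*} μ̃(s) ds = π*·μ̃(π*)`. -/
theorem critical_plastic_rate_exists_unique
    (pc : ℝ) (hpc : 0 < pc) (mu : ℝ → ℝ)
    (hc : ContinuousOn mu (Set.Ici 0))
    (hpos : ∀ p, 0 ≤ p → 0 < mu p)
    (hanti : StrictAntiOn mu (Set.Icc 0 pc))
    (hmono : StrictMonoOn mu (Set.Ici pc))
    (htop : Tendsto mu atTop atTop) :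
    ∃! ps : ℝ, pc < ps ∧ (∫ s in (0:ℝ)..ps, mu s) = ps * mu ps :=
  critical_plastic_rate_exists_unique_general pc hpc mu hc hanti hmono htop
end
end

section
/- (Convex envelope of the dissipation function.) Let π∘ > 0 and let μ̃ : [0,∞) → (0,∞) be continuous, strictly decreasing on [0, π∘], strictly increasing on [π∘, ∞), with μ̃(π) → ∞ as π → ∞; let π* > π∘ be the unique number with ∫₀^{π*} μ̃(s) ds = π*·μ̃(π*). Define R(π) = ∫₀^{π} μ̃(s) ds for π ≥ 0 and define G : [0,∞) → ℝ by G(π) = μ̃(π*)·π for 0 ≤ π ≤ π* and G(π) = R(π) for π ≥ π*. Then: (a) G is convex on [0,∞); (b) G(π) ≤ R(π) for all π ≥ 0, with strict inequality G(π) < R(π) for every π ∈ (0, π*); and (c) for every convex function g : [0,∞) → ℝ with g(π) ≤ R(π) for all π ≥ 0 one has g(π) ≤ G(π) for all π ≥ 0 (i.e. G is the convex envelope R** of R on [0,∞)). -/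
/-!
`G` is the integral from `0` of the continuous nondecreasing function `s ↦ μ̃ (max s π*)`, hence
convex; the defining identity `∫₀^{π*} μ̃ = π* μ̃(π*)` is exactly what makes the linear piece and
`R` glue into this integral. Because `μ̃` is unimodal, for `π ∈ (0, π*)` the mean of `μ̃` over
`[0, π]` exceeds its mean `μ̃(π*)` over `[0, π*]`, i.e. `G < R`. A convex `g ≤ R` has `g 0 ≤ 0`
and `g π* ≤ π* μ̃(π*)`, so it lies below the chord `G` on `[0, π*]`, and below `R = G` beyond.
-/

open MeasureTheory Set Filter

theorem Monotone.convexOn_integral {h : ℝ → ℝ} (hc : Continuous h) (hm : Monotone h) (a : ℝ) :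
    ConvexOn ℝ univ (fun x => ∫ s in a..x, h s) := by
  have hderiv : deriv (fun x => ∫ s in a..x, h s) = h :=
    funext (Continuous.deriv_integral h hc a)
  refine Monotone.convexOn_univ_of_deriv (fun x => ?_) (hderiv.symm ▸ hm)
  exact (hc.integral_hasStrictDerivAt a x).hasDerivAt.differentiableAt

theorem integral_comp_max_const_of_le (f : ℝ → ℝ) {a c p : ℝ} (hac : a ≤ c) (hpc : p ≤ c) :
    ∫ s in a..p, f (max s c) = (p - a) * f c := by
  have hconst : EqOn (fun s => f (max s c)) (fun _ => f c) (uIcc a p) := fun s hs => by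
    simp only [max_eq_right ((hs.2.trans (max_le hac hpc)))]
  rw [intervalIntegral.integral_congr hconst, intervalIntegral.integral_const, smul_eq_mul]

theorem integral_comp_max_const_of_mean_eq {f : ℝ → ℝ} {a c p : ℝ} (hf : ContinuousOn f (Ici a))
    (hac : a ≤ c) (hcp : c ≤ p) (hmean : ∫ s in a..c, f s = (c - a) * f c) :
    ∫ s in a..p, f (max s c) = ∫ s in a..p, f s := by
  have hint : ∀ x y, a ≤ x → a ≤ y → IntervalIntegrable f volume x y := fun x y hx hy =>
    (hf.mono fun s hs => le_trans (le_min hx hy) hs.1).intervalIntegrable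
  have hcont : Continuous fun s => f (max s c) :=
    (hf.mono (Ici_subset_Ici.2 hac)).comp_continuous (continuous_id.max continuous_const)
      fun s => le_max_right s c
  have htail : EqOn (fun s => f (max s c)) f (uIcc c p) := fun s hs => by
    simp only [max_eq_left (uIcc_of_le hcp ▸ hs).1]
  rw [← intervalIntegral.integral_add_adjacent_intervals (hcont.intervalIntegrable a c)
    (hcont.intervalIntegrable c p), integral_comp_max_const_of_le f hac le_rfl,
    intervalIntegral.integral_congr htail, ← hmean,
    intervalIntegral.integral_add_adjacent_intervals (hint a c le_rfl hac) (hint c p hac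
      (hac.trans hcp))]

theorem convexOn_integral_comp_max_const {f : ℝ → ℝ} {c : ℝ} (hf : ContinuousOn f (Ici c))
    (hmono : MonotoneOn f (Ici c)) (a : ℝ) :
    ConvexOn ℝ univ (fun p => ∫ s in a..p, f (max s c)) := by
  refine Monotone.convexOn_integral ?_ (fun x y hxy => ?_) a
  · exact hf.comp_continuous (continuous_id.max continuous_const) fun s => le_max_right s c
  · exact hmono (le_max_right x c) (le_max_right y c) (max_le_max hxy le_rfl)

theorem lt_max_of_strictAntiOn_of_strictMonoOn {f : ℝ → ℝ} {a c x y z : ℝ}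
    (hanti : StrictAntiOn f (Icc a c)) (hmono : StrictMonoOn f (Ici c))
    (hax : a ≤ x) (hxy : x < y) (hyz : y < z) : f y < max (f x) (f z) := by
  rcases le_or_gt y c with hyc | hcy
  · exact lt_max_of_lt_left (hanti ⟨hax, hxy.le.trans hyc⟩ ⟨hax.trans hxy.le, hyc⟩ hxy)
  · exact lt_max_of_lt_right (hmono hcy.le (hcy.trans hyz).le hyz)

theorem mul_lt_integral_of_lt_max {f : ℝ → ℝ} {a b p : ℝ} (hf : ContinuousOn f (Icc a b))
    (hlt : ∀ x y z, a ≤ x → x < y → y < z → z ≤ b → f y < max (f x) (f z))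
    (hb : ∫ s in a..b, f s = (b - a) * f b) (hp : p ∈ Ioo a b) :
    (p - a) * f b < ∫ s in a..p, f s := by
  obtain ⟨hap, hpb⟩ := hp
  have hint : ∀ x y, x ∈ Icc a b → y ∈ Icc a b → IntervalIntegrable f volume x y :=
    fun x y hx hy => (hf.mono (uIcc_subset_Icc hx hy)).intervalIntegrable
  have hap' : a ∈ Icc a b := ⟨le_rfl, hap.le.trans hpb.le⟩
  have hp' : p ∈ Icc a b := ⟨hap.le, hpb.le⟩
  have hb' : b ∈ Icc a b := ⟨hap.le.trans hpb.le, le_rfl⟩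
  rcases le_or_gt (f b) (f p) with hbp | hpb'
  · have hpos : 0 < ∫ s in a..p, (f s - f b) := by
      refine intervalIntegral.intervalIntegral_pos_of_pos_on
        ((hint a p hap' hp').sub intervalIntegrable_const) (fun s hs => ?_) hap
      have := (lt_max_iff.mp (hlt s p b hs.1.le hs.2 hpb le_rfl)).resolve_right hbp.not_gt
      linarith
    rw [intervalIntegral.integral_sub (hint a p hap' hp') intervalIntegrable_const,
      intervalIntegral.integral_const, smul_eq_mul] at hpos
    linarith
  · have hpos : 0 < ∫ s in p..b, (f b - f s) := by
      refine intervalIntegral.intervalIntegral_pos_of_pos_on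
        (intervalIntegrable_const.sub (hint p b hp' hb')) (fun s hs => ?_) hpb
      have := hlt p s b hap.le hs.1 hs.2 le_rfl
      rw [max_eq_right hpb'.le] at this
      linarith
    rw [intervalIntegral.integral_sub intervalIntegrable_const (hint p b hp' hb'),
      intervalIntegral.integral_const, smul_eq_mul] at hpos
    have hsplit := intervalIntegral.integral_add_adjacent_intervals (hint a p hap' hp')
      (hint p b hp' hb')
    linarith

theorem ConvexOn.le_mul_of_le_zero_of_le_mul {s : Set ℝ} {g : ℝ → ℝ} {b c p : ℝ}
    (hg : ConvexOn ℝ s g) (h0s : 0 ∈ s) (hbs : b ∈ s) (hb : 0 < b) (hg0 : g 0 ≤ 0)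
    (hgb : g b ≤ c * b) (hp : p ∈ Icc 0 b) : g p ≤ c * p := by
  have hw₀ : 0 ≤ (b - p) / b := div_nonneg (sub_nonneg.2 hp.2) hb.le
  have hw₁ : 0 ≤ p / b := div_nonneg hp.1 hb.le
  have hcomb := hg.2 h0s hbs hw₀ hw₁ (by field_simp; ring)
  simp only [smul_eq_mul, mul_zero, zero_add, div_mul_cancel₀ p hb.ne'] at hcomb
  calc g p ≤ (b - p) / b * g 0 + p / b * g b := hcomb
    _ ≤ (b - p) / b * 0 + p / b * (c * b) := by gcongr
    _ = c * p := by field_simp; ring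

theorem convex_envelope_of_dissipation_general
    (pc ps : ℝ) (hpc : 0 < pc) (mu R G : ℝ → ℝ)
    (hc : ContinuousOn mu (Set.Ici 0))
    (hanti : StrictAntiOn mu (Set.Icc 0 pc))
    (hmono : StrictMonoOn mu (Set.Ici pc))
    (hps : pc < ps) (hps_eq : (∫ s in (0:ℝ)..ps, mu s) = ps * mu ps)
    (hR : ∀ p, R p = ∫ s in (0:ℝ)..p, mu s)
    (hG1 : ∀ p ∈ Set.Icc (0:ℝ) ps, G p = mu ps * p)
    (hG2 : ∀ p, ps ≤ p → G p = R p) :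
    ConvexOn ℝ (Set.Ici 0) G ∧
    (∀ p, 0 ≤ p → G p ≤ R p) ∧
    (∀ p ∈ Set.Ioo 0 ps, G p < R p) ∧
    (∀ g : ℝ → ℝ, ConvexOn ℝ (Set.Ici 0) g → (∀ p, 0 ≤ p → g p ≤ R p) →
      ∀ p, 0 ≤ p → g p ≤ G p) := by
  have hps0 : 0 < ps := hpc.trans hps
  have hG : EqOn (fun p => ∫ s in (0:ℝ)..p, mu (max s ps)) G (Ici 0) := fun p hp => by
    dsimp only
    rcases le_total p ps with hp' | hp'
    · rw [hG1 p ⟨hp, hp'⟩, integral_comp_max_const_of_le mu hps0.le hp', sub_zero, mul_comm]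
    · rw [hG2 p hp', hR, integral_comp_max_const_of_mean_eq hc hps0.le hp' (by rwa [sub_zero])]
  have hconv : ConvexOn ℝ (Ici 0) G :=
    ((convexOn_integral_comp_max_const (hc.mono (Ici_subset_Ici.2 hps0.le))
      (hmono.mono (Ici_subset_Ici.2 hps.le)).monotoneOn 0).subset (subset_univ _)
      (convex_Ici 0)).congr hG
  have hlt : ∀ p ∈ Ioo 0 ps, G p < R p := fun p hp => by
    rw [hG1 p (Ioo_subset_Icc_self hp), hR, mul_comm]
    simpa only [sub_zero] using mul_lt_integral_of_lt_max (hc.mono Icc_subset_Ici_self)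
      (fun _ _ _ hx hxy hyz _ => lt_max_of_strictAntiOn_of_strictMonoOn hanti hmono hx hxy hyz)
      (by rwa [sub_zero]) hp
  have hR0 : R 0 = 0 := by rw [hR, intervalIntegral.integral_same]
  refine ⟨hconv, fun p hp => ?_, hlt, fun g hg hgR p hp => ?_⟩
  · rcases hp.eq_or_lt with rfl | hp
    · rw [hG1 0 ⟨le_rfl, hps0.le⟩, mul_zero, hR0]
    rcases lt_or_ge p ps with hpps | hpps
    · exact (hlt p ⟨hp, hpps⟩).le
    · exact (hG2 p hpps).le
  · rcases le_total ps p with hpps | hpps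
    · exact (hG2 p hpps).symm ▸ hgR p hp
    · rw [hG1 p ⟨hp, hpps⟩]
      refine hg.le_mul_of_le_zero_of_le_mul self_mem_Ici hps0.le hps0
        ((hgR 0 le_rfl).trans_eq hR0) ?_ ⟨hp, hpps⟩
      rw [mul_comm, ← hps_eq, ← hR]
      exact hgR ps hps0.le

/-- convex envelope of the dissipation function.
With `R(π) = ∫₀^π μ̃` and `G` equal to `μ̃(π*)·π` on `[0,π*]` and to `R` on
`[π*,∞)`, the function `G` is convex on `[0,∞)`, satisfies `G ≤ R` on `[0,∞)`
with strict inequality on `(0,π*)`, and is the largest convex function below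
`R` on `[0,∞)` (i.e. the convex envelope `R**`). -/
theorem convex_envelope_of_dissipation
    (pc ps : ℝ) (hpc : 0 < pc) (mu R G : ℝ → ℝ)
    (hc : ContinuousOn mu (Set.Ici 0))
    (hpos : ∀ p, 0 ≤ p → 0 < mu p)
    (hanti : StrictAntiOn mu (Set.Icc 0 pc))
    (hmono : StrictMonoOn mu (Set.Ici pc))
    (htop : Tendsto mu atTop atTop)
    (hps : pc < ps) (hps_eq : (∫ s in (0:ℝ)..ps, mu s) = ps * mu ps)
    (hR : ∀ p, R p = ∫ s in (0:ℝ)..p, mu s)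
    (hG1 : ∀ p ∈ Set.Icc (0:ℝ) ps, G p = mu ps * p)
    (hG2 : ∀ p, ps ≤ p → G p = R p) :
    ConvexOn ℝ (Set.Ici 0) G ∧
    (∀ p, 0 ≤ p → G p ≤ R p) ∧
    (∀ p ∈ Set.Ioo 0 ps, G p < R p) ∧
    (∀ g : ℝ → ℝ, ConvexOn ℝ (Set.Ici 0) g → (∀ p, 0 ≤ p → g p ≤ R p) →
      ∀ p, 0 ≤ p → g p ≤ G p) :=
  convex_envelope_of_dissipation_general pc ps hpc mu R G hc hanti hmono hps hps_eq hR hG1 hG2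
end

section
/- (Relaxation lower bound for the constrained dissipation minimization.) Let π∘ > 0 and μ̃ : [0,∞) → (0,∞) be continuous, strictly decreasing on [0, π∘], strictly increasing on [π∘, ∞), with μ̃(π) → ∞ as π → ∞; let π* > π∘ satisfy ∫₀^{π*} μ̃ = π*·μ̃(π*); set R(π) = ∫₀^{π} μ̃(s) ds and let G be its convex envelope, given by G(π) = μ̃(π*)·π on [0, π*] and G(π) = R(π) for π ≥ π*. Let H > 0 and v∞ > 0. Then for every Lebesgue-measurable function π : [−H,H] → [0,∞) with ∫_{−H}^{H} π(x) dx = 2 v∞ one has ∫_{−H}^{H} R(π(x)) dx ≥ 2H·G(v∞/H). -/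
/-!
`G` is the convex envelope of `R` on `[0, ∞)`, so at `p₀ = v∞ / H` there is an affine minorant
`ℓ = a p + b` of `R` on `[0, ∞)` touching `G` at `p₀`: the line `μ̃(π*) p` when `p₀ ≤ π*`, the tangent
to `R` at `p₀` otherwise. Integrating `ℓ ∘ π ≤ R ∘ π` over `[-H, H]` and using the mass constraint
gives `∫ R(π) ≥ a · 2v∞ + b · 2H = 2H ℓ(p₀) = 2H G(p₀)`.
-/

open MeasureTheory Set Filter

theorem ofReal_integral_le_lintegral_ofReal {α : Type*} [MeasurableSpace α] {μ : Measure α}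
    (f : α → ℝ) : ENNReal.ofReal (∫ x, f x ∂μ) ≤ ∫⁻ x, ENNReal.ofReal (f x) ∂μ := by
  by_cases hf : Integrable f μ
  · refine ENNReal.ofReal_le_of_le_toReal ?_
    rw [integral_eq_lintegral_pos_part_sub_lintegral_neg_part hf]
    exact sub_le_self _ ENNReal.toReal_nonneg
  · simp [integral_undef hf]

theorem ofReal_le_lintegral_of_affine_le {α : Type*} [MeasurableSpace α] {μ : Measure α}
    [IsFiniteMeasure μ] {f g : α → ℝ} {a b : ℝ} (hf : Integrable f μ)
    (hfg : ∀ᵐ x ∂μ, a * f x + b ≤ g x) :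
    ENNReal.ofReal (a * (∫ x, f x ∂μ) + b * μ.real univ) ≤ ∫⁻ x, ENNReal.ofReal (g x) ∂μ :=
  calc ENNReal.ofReal (a * (∫ x, f x ∂μ) + b * μ.real univ)
      = ENNReal.ofReal (∫ x, (a * f x + b) ∂μ) := by
        rw [integral_add (hf.const_mul a) (integrable_const b), integral_const_mul,
          integral_const, smul_eq_mul, mul_comm b]
    _ ≤ ∫⁻ x, ENNReal.ofReal (a * f x + b) ∂μ := ofReal_integral_le_lintegral_ofReal _
    _ ≤ ∫⁻ x, ENNReal.ofReal (g x) ∂μ :=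
        lintegral_mono_ae (hfg.mono fun _ hx => ENNReal.ofReal_le_ofReal hx)

section Primitive

variable {f : ℝ → ℝ} {a b : ℝ}

theorem MonotoneOn.mul_sub_le_integral (hf : MonotoneOn f (uIcc a b)) :
    f a * (b - a) ≤ ∫ x in a..b, f x := by
  rcases le_total a b with hab | hba
  · have := intervalIntegral.integral_mono_on hab (intervalIntegrable_const (μ := volume))
      hf.intervalIntegrable
      fun x hx => hf left_mem_uIcc (Icc_subset_uIcc hx) hx.1
    rwa [intervalIntegral.integral_const, smul_eq_mul, mul_comm] at this
  · have := intervalIntegral.integral_mono_on hba hf.intervalIntegrable.symm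
      (intervalIntegrable_const (μ := volume))
      fun x hx => hf (Icc_subset_uIcc' hx) left_mem_uIcc hx.2
    rw [intervalIntegral.integral_const, smul_eq_mul] at this
    rw [intervalIntegral.integral_symm]
    linarith

theorem AntitoneOn.integral_le_mul_sub (hf : AntitoneOn f (uIcc a b)) :
    ∫ x in a..b, f x ≤ f a * (b - a) := by
  have := hf.neg.mul_sub_le_integral
  simp only [intervalIntegral.integral_neg] at this
  linarith

theorem ContinuousOn.intervalIntegrable_of_nonneg (hc : ContinuousOn f (Ici 0)) (ha : 0 ≤ a)
    (hb : 0 ≤ b) : IntervalIntegrable f volume a b :=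
  (hc.mono (ordConnected_Ici.uIcc_subset ha hb)).intervalIntegrable

theorem integral_add_mul_sub_le_of_monotoneOn (hc : ContinuousOn f (Ici 0)) (ha : 0 ≤ a)
    (hb : 0 ≤ b) (hf : MonotoneOn f (uIcc a b)) :
    (∫ x in (0:ℝ)..a, f x) + f a * (b - a) ≤ ∫ x in (0:ℝ)..b, f x := by
  have := intervalIntegral.integral_interval_sub_left (hc.intervalIntegrable_of_nonneg le_rfl hb)
    (hc.intervalIntegrable_of_nonneg le_rfl ha)
  linarith [hf.mul_sub_le_integral]

theorem integral_le_add_mul_sub_of_antitoneOn (hc : ContinuousOn f (Ici 0)) (ha : 0 ≤ a)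
    (hb : 0 ≤ b) (hf : AntitoneOn f (uIcc a b)) :
    ∫ x in (0:ℝ)..b, f x ≤ (∫ x in (0:ℝ)..a, f x) + f a * (b - a) := by
  have := intervalIntegral.integral_interval_sub_left (hc.intervalIntegrable_of_nonneg le_rfl hb)
    (hc.intervalIntegrable_of_nonneg le_rfl ha)
  linarith [hf.integral_le_mul_sub]

theorem mul_integral_le_mul_integral_of_antitoneOn (hc : ContinuousOn f (Ici 0))
    (hf : AntitoneOn f (Icc 0 b)) (ha : 0 ≤ a) (hab : a ≤ b) :
    a * ∫ x in (0:ℝ)..b, f x ≤ b * ∫ x in (0:ℝ)..a, f x := by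
  have hb : 0 ≤ b := ha.trans hab
  have toward_zero := integral_le_add_mul_sub_of_antitoneOn hc ha le_rfl
    (hf.mono (uIcc_subset_Icc ⟨ha, hab⟩ ⟨le_rfl, hb⟩))
  have toward_b := integral_le_add_mul_sub_of_antitoneOn hc ha hb
    (hf.mono (uIcc_subset_Icc ⟨ha, hab⟩ ⟨hb, le_rfl⟩))
  rw [intervalIntegral.integral_same] at toward_zero
  nlinarith [mul_le_mul_of_nonneg_left toward_b ha,
    mul_le_mul_of_nonneg_left toward_zero (sub_nonneg.2 hab)]

end Primitive

section Envelope

variable {mu : ℝ → ℝ} {pc ps : ℝ}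

theorem mul_le_integral_of_integral_eq_mul (hc : ContinuousOn mu (Ici 0)) (hpc : 0 < pc)
    (hanti : AntitoneOn mu (Icc 0 pc)) (hmono : MonotoneOn mu (Ici pc)) (hps : pc ≤ ps)
    (hps_eq : ∫ s in (0:ℝ)..ps, mu s = ps * mu ps) {p : ℝ} (hp : 0 ≤ p) :
    mu ps * p ≤ ∫ s in (0:ℝ)..p, mu s := by
  have beyond_pc : ∀ q, pc ≤ q → mu ps * q ≤ ∫ s in (0:ℝ)..q, mu s := fun q hq => by
    have := integral_add_mul_sub_le_of_monotoneOn hc (hpc.le.trans hps) (hpc.le.trans hq)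
      (hmono.mono (ordConnected_Ici.uIcc_subset hps hq))
    linarith
  rcases le_total pc p with h | h
  · exact beyond_pc p h
  · have chord := mul_integral_le_mul_integral_of_antitoneOn hc hanti hp h
    have at_pc := beyond_pc pc le_rfl
    exact le_of_mul_le_mul_left (by nlinarith [mul_le_mul_of_nonneg_left at_pc hp]) hpc

theorem tangent_le_integral (hc : ContinuousOn mu (Ici 0)) (hpc : 0 < pc)
    (hanti : AntitoneOn mu (Icc 0 pc)) (hmono : MonotoneOn mu (Ici pc)) (hps : pc ≤ ps)
    (hps_eq : ∫ s in (0:ℝ)..ps, mu s = ps * mu ps) {p₀ p : ℝ} (hp₀ : ps ≤ p₀) (hp : 0 ≤ p) :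
    (∫ s in (0:ℝ)..p₀, mu s) + mu p₀ * (p - p₀) ≤ ∫ s in (0:ℝ)..p, mu s := by
  have tangent : ∀ q, ps ≤ q →
      (∫ s in (0:ℝ)..p₀, mu s) + mu p₀ * (q - p₀) ≤ ∫ s in (0:ℝ)..q, mu s := fun q hq =>
    integral_add_mul_sub_le_of_monotoneOn hc (hpc.le.trans (hps.trans hp₀))
      (hpc.le.trans (hps.trans hq))
      (hmono.mono (ordConnected_Ici.uIcc_subset (hps.trans hp₀) (hps.trans hq)))
  rcases le_total ps p with h | h
  · exact tangent p h
  · -- below `ps` the line has slope `mu p₀ ≥ mu ps`, so it stays under the secant `mu ps * p`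
    have hmu : mu ps ≤ mu p₀ := hmono (mem_Ici.2 hps) (mem_Ici.2 (hps.trans hp₀)) hp₀
    have secant := mul_le_integral_of_integral_eq_mul hc hpc hanti hmono hps hps_eq hp
    nlinarith [tangent ps le_rfl, mul_le_mul_of_nonneg_right hmu (sub_nonneg.2 h)]

theorem exists_affine_le_eq_convexEnvelope (hc : ContinuousOn mu (Ici 0)) (hpc : 0 < pc)
    (hanti : AntitoneOn mu (Icc 0 pc)) (hmono : MonotoneOn mu (Ici pc)) (hps : pc ≤ ps)
    (hps_eq : ∫ s in (0:ℝ)..ps, mu s = ps * mu ps) {R G : ℝ → ℝ}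
    (hR : ∀ p, R p = ∫ s in (0:ℝ)..p, mu s) (hG1 : ∀ p ∈ Icc (0:ℝ) ps, G p = mu ps * p)
    (hG2 : ∀ p, ps ≤ p → G p = R p) {p₀ : ℝ} (hp₀ : 0 ≤ p₀) :
    ∃ a b : ℝ, (∀ p, 0 ≤ p → a * p + b ≤ R p) ∧ a * p₀ + b = G p₀ := by
  rcases le_total p₀ ps with h | h
  · refine ⟨mu ps, 0, fun p hp => ?_, by rw [hG1 p₀ ⟨hp₀, h⟩, add_zero]⟩
    rw [add_zero, hR]
    exact mul_le_integral_of_integral_eq_mul hc hpc hanti hmono hps hps_eq hp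
  · refine ⟨mu p₀, R p₀ - mu p₀ * p₀, fun p hp => ?_, by rw [hG2 p₀ h]; ring⟩
    have := tangent_le_integral hc hpc hanti hmono hps hps_eq h hp
    rw [hR, hR]
    linarith

end Envelope

theorem dissipation_relaxation_lower_bound_general
    (pc ps : ℝ) (hpc : 0 < pc) (mu R G : ℝ → ℝ)
    (hc : ContinuousOn mu (Set.Ici 0))
    (hanti : StrictAntiOn mu (Set.Icc 0 pc))
    (hmono : StrictMonoOn mu (Set.Ici pc))
    (hps : pc < ps) (hps_eq : (∫ s in (0:ℝ)..ps, mu s) = ps * mu ps)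
    (hR : ∀ p, R p = ∫ s in (0:ℝ)..p, mu s)
    (hG1 : ∀ p ∈ Set.Icc (0:ℝ) ps, G p = mu ps * p)
    (hG2 : ∀ p, ps ≤ p → G p = R p)
    (H vinf : ℝ) (hH : 0 < H) (hv : 0 < vinf)
    (π : ℝ → ℝ)
    (hmeas : AEMeasurable π (volume.restrict (Set.Icc (-H) H)))
    (hnn : ∀ x ∈ Set.Icc (-H) H, 0 ≤ π x)
    (hconstraint : (∫⁻ x in Set.Icc (-H) H, ENNReal.ofReal (π x))
      = ENNReal.ofReal (2 * vinf)) :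
    ENNReal.ofReal (2 * H * G (vinf / H))
      ≤ ∫⁻ x in Set.Icc (-H) H, ENNReal.ofReal (R (π x)) := by
  have hmem : ∀ᵐ x ∂volume.restrict (Icc (-H) H), x ∈ Icc (-H) H :=
    ae_restrict_mem measurableSet_Icc
  have hπ_nonneg : 0 ≤ᵐ[volume.restrict (Icc (-H) H)] π := hmem.mono hnn
  have hπ_int : Integrable π (volume.restrict (Icc (-H) H)) :=
    ⟨hmeas.aestronglyMeasurable,
      (hasFiniteIntegral_iff_ofReal hπ_nonneg).2 (hconstraint ▸ ENNReal.ofReal_lt_top)⟩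
  have hπ_mass : ∫ x in Icc (-H) H, π x = 2 * vinf := by
    rw [integral_eq_lintegral_of_nonneg_ae hπ_nonneg hmeas.aestronglyMeasurable, hconstraint,
      ENNReal.toReal_ofReal (by positivity)]
  have hvol : (volume.restrict (Icc (-H) H)).real univ = 2 * H := by
    rw [measureReal_restrict_apply_univ, Real.volume_real_Icc_of_le (by linarith)]
    ring
  obtain ⟨a, b, hle, heq⟩ := exists_affine_le_eq_convexEnvelope hc hpc hanti.antitoneOn
    hmono.monotoneOn hps.le hps_eq hR hG1 hG2 (div_pos hv hH).le
  calc ENNReal.ofReal (2 * H * G (vinf / H))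
      = ENNReal.ofReal
          (a * (∫ x in Icc (-H) H, π x) + b * (volume.restrict (Icc (-H) H)).real univ) := by
        rw [hπ_mass, hvol, ← heq]
        field_simp
    _ ≤ ∫⁻ x in Icc (-H) H, ENNReal.ofReal (R (π x)) :=
        ofReal_le_lintegral_of_affine_le hπ_int (hmem.mono fun x hx => hle _ (hnn x hx))

/-- relaxation lower bound for the constrained dissipation
minimization.  With `R(π) = ∫₀^π μ̃` and `G` its convex envelope (equal to
`μ̃(π*)·π` on `[0,π*]` and to `R` on `[π*,∞)`), every measurable
`π : [-H,H] → [0,∞)` with `∫_{-H}^H π = 2 v∞` satisfies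
`∫_{-H}^H R(π(x)) dx ≥ 2H·G(v∞/H)` (integrals in `[0,∞]`). -/
theorem dissipation_relaxation_lower_bound
    (pc ps : ℝ) (hpc : 0 < pc) (mu R G : ℝ → ℝ)
    (hc : ContinuousOn mu (Set.Ici 0))
    (hpos : ∀ p, 0 ≤ p → 0 < mu p)
    (hanti : StrictAntiOn mu (Set.Icc 0 pc))
    (hmono : StrictMonoOn mu (Set.Ici pc))
    (htop : Tendsto mu atTop atTop)
    (hps : pc < ps) (hps_eq : (∫ s in (0:ℝ)..ps, mu s) = ps * mu ps)
    (hR : ∀ p, R p = ∫ s in (0:ℝ)..p, mu s)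
    (hG1 : ∀ p ∈ Set.Icc (0:ℝ) ps, G p = mu ps * p)
    (hG2 : ∀ p, ps ≤ p → G p = R p)
    (H vinf : ℝ) (hH : 0 < H) (hv : 0 < vinf)
    (π : ℝ → ℝ)
    (hmeas : AEMeasurable π (volume.restrict (Set.Icc (-H) H)))
    (hnn : ∀ x ∈ Set.Icc (-H) H, 0 ≤ π x)
    (hconstraint : (∫⁻ x in Set.Icc (-H) H, ENNReal.ofReal (π x))
      = ENNReal.ofReal (2 * vinf)) :
    ENNReal.ofReal (2 * H * G (vinf / H))
      ≤ ∫⁻ x in Set.Icc (-H) H, ENNReal.ofReal (R (π x)) :=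
  dissipation_relaxation_lower_bound_general pc ps hpc mu R G hc hanti hmono hps hps_eq hR hG1 hG2 H
    vinf hH hv π hmeas hnn hconstraint
end

section
/- (Characterization of minimizers for small shear velocity.) Let π∘ > 0 and μ̃ : [0,∞) → (0,∞) be continuous, strictly decreasing on [0, π∘], strictly increasing on [π∘, ∞), with μ̃(π) → ∞ as π → ∞; let π* > π∘ satisfy ∫₀^{π*} μ̃ = π*·μ̃(π*); set R(π) = ∫₀^{π} μ̃(s) ds. Let H > 0 and 0 < v∞ < π*·H. Then a Lebesgue-integrable function π : [−H,H] → [0,∞) with ∫_{−H}^{H} π(x) dx = 2 v∞ satisfies ∫_{−H}^{H} R(π(x)) dx = 2 v∞·μ̃(π*) (the minimal possible value) if and only if π(x) ∈ {0, π*} for almost every x ∈ [−H,H]; in that case the set {x : π(x) = π*} has Lebesgue measure 2 v∞/π*. -/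
open MeasureTheory Set Filter

/-!
Write `m = μ̃(π*)`. The gap `R p - m p = ∫₀^p (μ̃ - m)` vanishes at `0` and at `π*`, and the
valley shape of `μ̃` makes it strictly positive at every other `p ≥ 0`. Hence
`∫ R(π) ≥ m ∫ π = 2 v∞ m`, with equality exactly when the gap vanishes a.e., i.e. when `π` takes
only the values `0` and `π*`. Such a `π` is `π*` times the indicator of `{π = π*}`, so the
constraint `∫ π = 2 v∞` fixes the measure of that set.
-/

lemma IntervalIntegrable.of_continuousOn_Ici {f : ℝ → ℝ} {c a b : ℝ}
    (hf : ContinuousOn f (Ici c)) (ha : c ≤ a) (hb : c ≤ b) :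
    IntervalIntegrable f volume a b :=
  (hf.mono fun _ hx => (le_min ha hb).trans hx.1).intervalIntegrable

lemma mul_sub_lt_intervalIntegral {f : ℝ → ℝ} {a b m : ℝ} (hab : a < b)
    (hf : IntervalIntegrable f volume a b) (hlt : ∀ s ∈ Ioo a b, m < f s) :
    m * (b - a) < ∫ s in a..b, f s := by
  have hpos := intervalIntegral.intervalIntegral_pos_of_pos_on
    (hf.sub intervalIntegrable_const) (fun s hs => sub_pos.2 (hlt s hs)) hab
  rw [intervalIntegral.integral_sub hf intervalIntegrable_const,
    intervalIntegral.integral_const, smul_eq_mul] at hpos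
  linarith

lemma intervalIntegral_lt_mul_sub {f : ℝ → ℝ} {a b m : ℝ} (hab : a < b)
    (hf : IntervalIntegrable f volume a b) (hlt : ∀ s ∈ Ioo a b, f s < m) :
    ∫ s in a..b, f s < m * (b - a) := by
  have := mul_sub_lt_intervalIntegral hab hf.neg fun s hs => neg_lt_neg (hlt s hs)
  simp only [Pi.neg_apply, intervalIntegral.integral_neg] at this
  linarith

section ValleyShaped

variable {mu : ℝ → ℝ} {pc ps : ℝ}

/-- If `mu 0 ≤ mu ps`, then `mu < mu ps` on `(0, ps)`, contradicting `∫₀^ps mu = ps * mu ps`. -/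
lemma lt_apply_zero_of_integral_eq_mul (hpc : 0 < pc) (hc : ContinuousOn mu (Ici 0))
    (hanti : StrictAntiOn mu (Icc 0 pc)) (hmono : StrictMonoOn mu (Ici pc)) (hps : pc < ps)
    (hps_eq : ∫ s in (0:ℝ)..ps, mu s = ps * mu ps) :
    mu ps < mu 0 := by
  by_contra! hle
  have hlt : ∀ s ∈ Ioo 0 ps, mu s < mu ps := by
    intro s hs
    rcases le_total s pc with hs_pc | hs_pc
    · exact (hanti ⟨le_rfl, hpc.le⟩ ⟨hs.1.le, hs_pc⟩ hs.1).trans_le hle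
    · exact hmono hs_pc (hps.le : pc ≤ ps) hs.2
  have := intervalIntegral_lt_mul_sub (hpc.trans hps)
    (.of_continuousOn_Ici hc le_rfl (hpc.trans hps).le) hlt
  linarith

lemma exists_mem_Ioo_apply_eq (hpc : 0 < pc) (hc : ContinuousOn mu (Ici 0))
    (hanti : StrictAntiOn mu (Icc 0 pc)) (hmono : StrictMonoOn mu (Ici pc)) (hps : pc < ps)
    (hps_eq : ∫ s in (0:ℝ)..ps, mu s = ps * mu ps) :
    ∃ p₁ ∈ Ioo 0 pc, mu p₁ = mu ps :=
  intermediate_value_Ioo' hpc.le (hc.mono fun _ hx => hx.1)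
    ⟨hmono (le_refl pc) (hps.le : pc ≤ ps) hps,
      lt_apply_zero_of_integral_eq_mul hpc hc hanti hmono hps hps_eq⟩

/-- `mu - mu ps` is positive on `(0, p₁)`, where `p₁ ∈ (0, pc)` solves `mu p₁ = mu ps`, negative on
`(p₁, ps)` and positive on `(ps, ∞)`; since its integral over `(0, ps)` vanishes, its integral over
`(0, p)` is positive for every other `p > 0`. -/
lemma mul_lt_intervalIntegral (hpc : 0 < pc) (hc : ContinuousOn mu (Ici 0))
    (hanti : StrictAntiOn mu (Icc 0 pc)) (hmono : StrictMonoOn mu (Ici pc)) (hps : pc < ps)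
    (hps_eq : ∫ s in (0:ℝ)..ps, mu s = ps * mu ps) {p : ℝ} (hp : 0 < p) (hp_ne : p ≠ ps) :
    mu ps * p < ∫ s in (0:ℝ)..p, mu s := by
  have hps0 : 0 ≤ ps := (hpc.trans hps).le
  obtain ⟨p₁, ⟨hp₁0, hp₁pc⟩, hp₁_eq⟩ := exists_mem_Ioo_apply_eq hpc hc hanti hmono hps hps_eq
  have hsplit (a b : ℝ) (ha : 0 ≤ a) (hb : 0 ≤ b) :
      (∫ s in (0:ℝ)..a, mu s) + ∫ s in a..b, mu s = ∫ s in (0:ℝ)..b, mu s :=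
    intervalIntegral.integral_add_adjacent_intervals
      (.of_continuousOn_Ici hc le_rfl ha) (.of_continuousOn_Ici hc ha hb)
  rcases hp_ne.lt_or_gt with hlt | hgt
  · rcases le_total p p₁ with hle | hle
    · have habove : ∀ s ∈ Ioo 0 p, mu ps < mu s := fun s hs =>
        hp₁_eq ▸ hanti ⟨hs.1.le, (hs.2.trans_le hle).le.trans hp₁pc.le⟩
          ⟨hp₁0.le, hp₁pc.le⟩ (hs.2.trans_le hle)
      have := mul_sub_lt_intervalIntegral hp (.of_continuousOn_Ici hc le_rfl hp.le) habove
      linarith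
    · have hbelow : ∀ s ∈ Ioo p ps, mu s < mu ps := by
        intro s hs
        have hp₁s : p₁ < s := hle.trans_lt hs.1
        rcases le_total s pc with hs_pc | hs_pc
        · exact hp₁_eq ▸ hanti ⟨hp₁0.le, hp₁pc.le⟩ ⟨(hp₁0.trans hp₁s).le, hs_pc⟩ hp₁s
        · exact hmono hs_pc (hps.le : pc ≤ ps) hs.2
      have := intervalIntegral_lt_mul_sub hlt (.of_continuousOn_Ici hc hp.le hps0) hbelow
      linarith [hsplit p ps hp.le hps0]
  · have habove : ∀ s ∈ Ioo ps p, mu ps < mu s := fun s hs =>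
      hmono (hps.le : pc ≤ ps) (hps.trans hs.1).le hs.1
    have := mul_sub_lt_intervalIntegral hgt (.of_continuousOn_Ici hc hps0 hp.le) habove
    linarith [hsplit ps p hps0 hp.le]

lemma intervalIntegral_eq_mul_iff (hpc : 0 < pc) (hc : ContinuousOn mu (Ici 0))
    (hanti : StrictAntiOn mu (Icc 0 pc)) (hmono : StrictMonoOn mu (Ici pc)) (hps : pc < ps)
    (hps_eq : ∫ s in (0:ℝ)..ps, mu s = ps * mu ps) {p : ℝ} (hp : 0 ≤ p) :
    ∫ s in (0:ℝ)..p, mu s = mu ps * p ↔ p = 0 ∨ p = ps := by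
  refine ⟨fun h => ?_, ?_⟩
  · by_contra! hne
    exact (mul_lt_intervalIntegral hpc hc hanti hmono hps hps_eq
      (hp.lt_of_ne' hne.1) hne.2).ne' h
  · rintro (rfl | rfl)
    · simp
    · rw [hps_eq, mul_comm]

lemma mul_le_intervalIntegral (hpc : 0 < pc) (hc : ContinuousOn mu (Ici 0))
    (hanti : StrictAntiOn mu (Icc 0 pc)) (hmono : StrictMonoOn mu (Ici pc)) (hps : pc < ps)
    (hps_eq : ∫ s in (0:ℝ)..ps, mu s = ps * mu ps) {p : ℝ} (hp : 0 ≤ p) :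
    mu ps * p ≤ ∫ s in (0:ℝ)..p, mu s := by
  rcases eq_or_ne p ps with rfl | hne
  · rw [hps_eq, mul_comm]
  rcases hp.eq_or_lt with rfl | hpos
  · simp
  exact (mul_lt_intervalIntegral hpc hc hanti hmono hps hps_eq hpos hne).le

end ValleyShaped

section Integral

variable {α : Type*} [MeasurableSpace α] {μ : Measure α}

lemma integral_eq_iff_of_ae_le_of_integral_ne_zero {f g : α → ℝ} (hf : Integrable f μ)
    (hfg : f ≤ᵐ[μ] g) (hne : ∫ x, f x ∂μ ≠ 0) :
    ∫ x, g x ∂μ = ∫ x, f x ∂μ ↔ g =ᵐ[μ] f := by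
  refine ⟨fun h => ?_, integral_congr_ae⟩
  have hg : Integrable g μ := .of_integral_ne_zero (h ▸ hne)
  exact ((integral_eq_iff_of_ae_le hf hg hfg).1 h.symm).symm

lemma integral_eq_measureReal_mul_of_ae_eq_zero_or {f : α → ℝ} {a : ℝ}
    (hf : AEMeasurable f μ) (h : ∀ᵐ x ∂μ, f x = 0 ∨ f x = a) :
    ∫ x, f x ∂μ = μ.real {x | f x = a} * a := by
  have hind : f =ᵐ[μ] {x | f x = a}.indicator fun _ => a := by
    filter_upwards [h] with x hx
    by_cases hxa : f x = a
    · simp [hxa]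
    · simpa [hxa] using hx.resolve_right hxa
  have hs : NullMeasurableSet {x | f x = a} μ := hf.nullMeasurable (measurableSet_singleton a)
  rw [integral_congr_ae hind, integral_indicator₀ hs, setIntegral_const, smul_eq_mul]

end Integral

theorem minimizers_small_velocity_general
    (pc ps : ℝ) (hpc : 0 < pc) (mu R : ℝ → ℝ)
    (hc : ContinuousOn mu (Set.Ici 0))
    (hpos : ∀ p, 0 ≤ p → 0 < mu p)
    (hanti : StrictAntiOn mu (Set.Icc 0 pc))
    (hmono : StrictMonoOn mu (Set.Ici pc))
    (hps : pc < ps) (hps_eq : (∫ s in (0:ℝ)..ps, mu s) = ps * mu ps)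
    (hR : ∀ p, R p = ∫ s in (0:ℝ)..p, mu s)
    (H vinf : ℝ) (hv : 0 < vinf)
    (π : ℝ → ℝ)
    (hint : IntegrableOn π (Set.Icc (-H) H))
    (hnn : ∀ x ∈ Set.Icc (-H) H, 0 ≤ π x)
    (hconstraint : (∫ x in Set.Icc (-H) H, π x) = 2 * vinf) :
    ((∫ x in Set.Icc (-H) H, R (π x)) = 2 * vinf * mu ps ↔
      ∀ᵐ x ∂(volume.restrict (Set.Icc (-H) H)), π x = 0 ∨ π x = ps) ∧
    ((∫ x in Set.Icc (-H) H, R (π x)) = 2 * vinf * mu ps →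
      volume {x ∈ Set.Icc (-H) H | π x = ps} = ENNReal.ofReal (2 * vinf / ps)) := by
  have hnn_ae : ∀ᵐ x ∂(volume.restrict (Icc (-H) H)), 0 ≤ π x :=
    ae_restrict_of_forall_mem measurableSet_Icc hnn
  have hiff : (∫ x in Icc (-H) H, R (π x)) = 2 * vinf * mu ps ↔
      ∀ᵐ x ∂(volume.restrict (Icc (-H) H)), π x = 0 ∨ π x = ps := by
    have hne : ∫ x in Icc (-H) H, mu ps * π x ≠ 0 := by
      rw [integral_const_mul, hconstraint]
      exact mul_ne_zero (hpos ps (hpc.trans hps).le).ne' (by positivity)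
    rw [mul_comm _ (mu ps), ← hconstraint, ← integral_const_mul,
      integral_eq_iff_of_ae_le_of_integral_ne_zero (hint.const_mul _) _ hne]
    · refine eventually_congr (hnn_ae.mono fun x hx => ?_)
      dsimp only
      rw [hR]
      exact intervalIntegral_eq_mul_iff hpc hc hanti hmono hps hps_eq hx
    · filter_upwards [hnn_ae] with x hx
      rw [hR]
      exact mul_le_intervalIntegral hpc hc hanti hmono hps hps_eq hx
  refine ⟨hiff, fun h => ?_⟩
  have hmeas := integral_eq_measureReal_mul_of_ae_eq_zero_or hint.aemeasurable (hiff.1 h)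
  rw [hconstraint] at hmeas
  have hset : {x ∈ Icc (-H) H | π x = ps} = {x | π x = ps} ∩ Icc (-H) H := by
    ext x
    exact and_comm
  rw [hset, ← Measure.restrict_apply' measurableSet_Icc, ← ofReal_measureReal (measure_ne_top _ _),
    hmeas, mul_div_cancel_right₀ _ (hpc.trans hps).ne']

/-- characterization of minimizers for small shear
velocity.  With `R(π) = ∫₀^π μ̃` and `0 < v∞ < π*·H`, an integrable
`π : [-H,H] → [0,∞)` with `∫ π = 2 v∞` attains
`∫ R(π(x)) dx = 2 v∞·μ̃(π*)` (the minimal possible value) if and only if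
`π(x) ∈ {0, π*}` a.e.; in that case `{x : π(x) = π*}` has measure
`2 v∞/π*`. -/
theorem minimizers_small_velocity
    (pc ps : ℝ) (hpc : 0 < pc) (mu R : ℝ → ℝ)
    (hc : ContinuousOn mu (Set.Ici 0))
    (hpos : ∀ p, 0 ≤ p → 0 < mu p)
    (hanti : StrictAntiOn mu (Set.Icc 0 pc))
    (hmono : StrictMonoOn mu (Set.Ici pc))
    (htop : Tendsto mu atTop atTop)
    (hps : pc < ps) (hps_eq : (∫ s in (0:ℝ)..ps, mu s) = ps * mu ps)
    (hR : ∀ p, R p = ∫ s in (0:ℝ)..p, mu s)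
    (H vinf : ℝ) (hH : 0 < H) (hv : 0 < vinf) (hvs : vinf < ps * H)
    (π : ℝ → ℝ)
    (hint : IntegrableOn π (Set.Icc (-H) H))
    (hnn : ∀ x ∈ Set.Icc (-H) H, 0 ≤ π x)
    (hconstraint : (∫ x in Set.Icc (-H) H, π x) = 2 * vinf) :
    ((∫ x in Set.Icc (-H) H, R (π x)) = 2 * vinf * mu ps ↔
      ∀ᵐ x ∂(volume.restrict (Set.Icc (-H) H)), π x = 0 ∨ π x = ps) ∧
    ((∫ x in Set.Icc (-H) H, R (π x)) = 2 * vinf * mu ps →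
      volume {x ∈ Set.Icc (-H) H | π x = ps} = ENNReal.ofReal (2 * vinf / ps)) :=
  minimizers_small_velocity_general pc ps hpc mu R hc hpos hanti hmono hps hps_eq hR H vinf hv π
    hint hnn hconstraint
end

section
/- (Unique minimizer for large shear velocity.) Let π∘ > 0 and μ̃ : [0,∞) → (0,∞) be continuous, strictly decreasing on [0, π∘], strictly increasing on [π∘, ∞), with μ̃(π) → ∞ as π → ∞; let π* > π∘ satisfy ∫₀^{π*} μ̃ = π*·μ̃(π*); set R(π) = ∫₀^{π} μ̃(s) ds. Let H > 0 and v∞ ≥ π*·H. Then for every Lebesgue-integrable π : [−H,H] → [0,∞) with ∫_{−H}^{H} π(x) dx = 2 v∞ one has ∫_{−H}^{H} R(π(x)) dx ≥ 2H·R(v∞/H), and equality holds if and only if π(x) = v∞/H for almost every x ∈ [−H,H]. -/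
/-!
`R` is not convex, but for every `m ≥ π*` its tangent line `R(m) + μ̃(m)(t - m)` at `m` still
stays below `R` on `[0, ∞)`, strictly so for `t > m`: to the right of `m` because `μ̃` increases
there, to the left because `μ̃` is unimodal and `∫₀ᵐ μ̃ ≤ m μ̃(m)` by the choice of `π*`.
Integrating this supporting line along `π`, whose mean is `m = v∞/H`, gives the lower bound.
In the case of equality `R ∘ π` coincides a.e. with the line, which forces `π ≤ m` a.e.;
since `π` has mean `m`, this means `π = m` a.e.
-/

open MeasureTheory Set Filter

section Primitive

variable {f : ℝ → ℝ} {pc ps a b s t m : ℝ}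

lemma intervalIntegrable_of_continuousOn_Ici (hf : ContinuousOn f (Ici 0)) (ha : 0 ≤ a)
    (hb : 0 ≤ b) : IntervalIntegrable f volume a b :=
  (hf.mono fun _ hx => (le_min ha hb).trans hx.1).intervalIntegrable

lemma le_max_of_antitoneOn_of_monotoneOn (hanti : AntitoneOn f (Icc 0 pc))
    (hmono : MonotoneOn f (Ici pc)) (ht : 0 ≤ t) (hts : t ≤ s) (hsm : s ≤ m) :
    f s ≤ max (f t) (f m) := by
  rcases le_total s pc with hs | hs
  · exact le_max_of_le_left (hanti ⟨ht, hts.trans hs⟩ ⟨ht.trans hts, hs⟩ hts)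
  · exact le_max_of_le_right (hmono hs (hs.trans hsm) hsm)

lemma integral_le_mul_self_of_le (hf : ContinuousOn f (Ici 0)) (hmono : MonotoneOn f (Ici pc))
    (hps0 : 0 ≤ ps) (hps : pc ≤ ps) (hps_eq : ∫ s in (0:ℝ)..ps, f s = ps * f ps)
    (hm : ps ≤ m) : ∫ s in (0:ℝ)..m, f s ≤ m * f m := by
  have hfm : ps * f ps ≤ ps * f m :=
    mul_le_mul_of_nonneg_left (hmono hps (hps.trans hm) hm) hps0
  have htail : ∫ s in ps..m, f s ≤ (m - ps) * f m := by
    simpa using intervalIntegral.integral_mono_on hm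
      (intervalIntegrable_of_continuousOn_Ici hf hps0 (hps0.trans hm)) intervalIntegrable_const
      fun s hs => hmono (hps.trans hs.1) (hps.trans hm) hs.2
  rw [← intervalIntegral.integral_add_adjacent_intervals
    (intervalIntegrable_of_continuousOn_Ici hf le_rfl hps0)
    (intervalIntegrable_of_continuousOn_Ici hf hps0 (hps0.trans hm)), hps_eq]
  linarith

lemma integral_le_mul_sub_of_le (hf : ContinuousOn f (Ici 0)) (hanti : AntitoneOn f (Icc 0 pc))
    (hmono : MonotoneOn f (Ici pc)) (hps0 : 0 ≤ ps) (hps : pc ≤ ps)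
    (hps_eq : ∫ s in (0:ℝ)..ps, f s = ps * f ps) (hm : ps ≤ m) (ht : 0 ≤ t) (htm : t ≤ m) :
    ∫ s in t..m, f s ≤ (m - t) * f m := by
  have hm0 : 0 ≤ m := hps0.trans hm
  rcases le_or_gt (f t) (f m) with hle | hlt
  · simpa using intervalIntegral.integral_mono_on htm
      (intervalIntegrable_of_continuousOn_Ici hf ht hm0) intervalIntegrable_const
      fun s hs => (le_max_of_antitoneOn_of_monotoneOn hanti hmono ht hs.1 hs.2).trans
        (max_le hle le_rfl)
  · -- here `t < pc`, so `f ≥ f t > f m` on `[0, t]`, while `∫₀ᵐ f ≤ m f m` by the choice of `ps`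
    have htpc : t ≤ pc := le_of_not_ge fun h => hlt.not_ge (hmono h (h.trans htm) htm)
    have hhead : t * f m ≤ ∫ s in (0:ℝ)..t, f s := by
      simpa using intervalIntegral.integral_mono_on ht intervalIntegrable_const
        (intervalIntegrable_of_continuousOn_Ici hf le_rfl ht)
        fun s hs => hlt.le.trans (hanti ⟨hs.1, hs.2.trans htpc⟩ ⟨ht, htpc⟩ hs.2)
    have hwhole := integral_le_mul_self_of_le hf hmono hps0 hps hps_eq hm
    rw [← intervalIntegral.integral_interval_sub_left
      (intervalIntegrable_of_continuousOn_Ici hf le_rfl hm0)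
      (intervalIntegrable_of_continuousOn_Ici hf le_rfl ht)]
    linarith

theorem integral_add_mul_sub_le_integral (hf : ContinuousOn f (Ici 0))
    (hanti : AntitoneOn f (Icc 0 pc)) (hmono : MonotoneOn f (Ici pc)) (hps0 : 0 ≤ ps)
    (hps : pc ≤ ps) (hps_eq : ∫ s in (0:ℝ)..ps, f s = ps * f ps) (hm : ps ≤ m) (ht : 0 ≤ t) :
    (∫ s in (0:ℝ)..m, f s) + f m * (t - m) ≤ ∫ s in (0:ℝ)..t, f s := by
  have hm0 : 0 ≤ m := hps0.trans hm
  rcases le_total t m with htm | hmt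
  · have := integral_le_mul_sub_of_le hf hanti hmono hps0 hps hps_eq hm ht htm
    rw [← intervalIntegral.integral_interval_sub_left
      (intervalIntegrable_of_continuousOn_Ici hf le_rfl hm0)
      (intervalIntegrable_of_continuousOn_Ici hf le_rfl ht)] at this
    linarith
  · have : (t - m) * f m ≤ ∫ s in m..t, f s := by
      simpa using intervalIntegral.integral_mono_on hmt intervalIntegrable_const
        (intervalIntegrable_of_continuousOn_Ici hf hm0 ht)
        fun s hs => hmono (hps.trans hm) ((hps.trans hm).trans hs.1) hs.1
    rw [← intervalIntegral.integral_add_adjacent_intervals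
      (intervalIntegrable_of_continuousOn_Ici hf le_rfl hm0)
      (intervalIntegrable_of_continuousOn_Ici hf hm0 ht)]
    linarith

theorem integral_add_mul_sub_lt_integral (hf : ContinuousOn f (Ici 0))
    (hmono : StrictMonoOn f (Ici pc)) (hpcm : pc ≤ m) (hm0 : 0 ≤ m) (hmt : m < t) :
    (∫ s in (0:ℝ)..m, f s) + f m * (t - m) < ∫ s in (0:ℝ)..t, f s := by
  have : (t - m) * f m < ∫ s in m..t, f s := by
    simpa using intervalIntegral.integral_lt_integral_of_continuousOn_of_le_of_exists_lt hmt
      continuousOn_const (hf.mono fun s hs => hm0.trans hs.1)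
      (fun s hs => hmono.monotoneOn hpcm (hpcm.trans hs.1.le) hs.1.le)
      ⟨t, right_mem_Icc.mpr hmt.le, hmono hpcm (hpcm.trans hmt.le) hmt⟩
  rw [← intervalIntegral.integral_add_adjacent_intervals
    (intervalIntegrable_of_continuousOn_Ici hf le_rfl hm0)
    (intervalIntegrable_of_continuousOn_Ici hf hm0 (hm0.trans hmt.le))]
  linarith

end Primitive

section SupportingLine

variable {α : Type*} [MeasurableSpace α] {ν : Measure α}
  {f : α → ℝ} {φ : ℝ → ℝ} {S : Set ℝ} {b c m : ℝ}

lemma ofReal_integral_le_lintegral_ofReal_s15 (hf : Integrable f ν) :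
    ENNReal.ofReal (∫ x, f x ∂ν) ≤ ∫⁻ x, ENNReal.ofReal (f x) ∂ν := by
  refine (ENNReal.ofReal_le_ofReal ?_).trans ENNReal.ofReal_toReal_le
  rw [integral_eq_lintegral_pos_part_sub_lintegral_neg_part hf]
  exact sub_le_self _ ENNReal.toReal_nonneg

lemma aestronglyMeasurable_integral_comp {g : ℝ → ℝ} (hg : ContinuousOn g (Ici 0))
    (hf : AEStronglyMeasurable f ν) (hf0 : ∀ᵐ x ∂ν, f x ∈ Ici 0) :
    AEStronglyMeasurable (fun x => ∫ s in (0:ℝ)..f x, g s) ν := by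
  have hcont : Continuous fun s => g (max s 0) :=
    hg.comp_continuous (by fun_prop) fun s => le_max_right s 0
  refine ((intervalIntegral.continuous_primitive (fun _ _ => hcont.intervalIntegrable (μ := volume) _ _)
    0).comp_aestronglyMeasurable hf).congr ?_
  filter_upwards [hf0] with x hx
  refine intervalIntegral.integral_congr fun s hs => ?_
  rw [uIcc_of_le hx] at hs
  simp only [max_eq_left hs.1]

variable [IsFiniteMeasure ν]

lemma integrable_add_mul_sub (hf : Integrable f ν) :
    Integrable (fun x => b + c * (f x - m)) ν :=
  (integrable_const b).add ((hf.sub (integrable_const m)).const_mul c)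

lemma integral_add_mul_sub_eq (hf : Integrable f ν) (hmean : ∫ x, f x ∂ν = ν.real univ * m) :
    ∫ x, (b + c * (f x - m)) ∂ν = ν.real univ * b := by
  have hdev : Integrable (fun x => c * (f x - m)) ν := (hf.sub (integrable_const m)).const_mul c
  rw [integral_add (integrable_const b) hdev, integral_const_mul,
    integral_sub hf (integrable_const m), hmean, integral_const, integral_const, smul_eq_mul,
    smul_eq_mul]
  ring

lemma ofReal_le_lintegral_of_supportingLine (hf : Integrable f ν)
    (hmean : ∫ x, f x ∂ν = ν.real univ * m) (hS : ∀ᵐ x ∂ν, f x ∈ S)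
    (hline : ∀ t ∈ S, φ m + c * (t - m) ≤ φ t) :
    ENNReal.ofReal (ν.real univ * φ m) ≤ ∫⁻ x, ENNReal.ofReal (φ (f x)) ∂ν :=
  calc ENNReal.ofReal (ν.real univ * φ m)
      = ENNReal.ofReal (∫ x, (φ m + c * (f x - m)) ∂ν) := by
        rw [integral_add_mul_sub_eq hf hmean]
    _ ≤ ∫⁻ x, ENNReal.ofReal (φ m + c * (f x - m)) ∂ν :=
        ofReal_integral_le_lintegral_ofReal_s15 (integrable_add_mul_sub hf)
    _ ≤ ∫⁻ x, ENNReal.ofReal (φ (f x)) ∂ν :=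
        lintegral_mono_ae (hS.mono fun x hx => ENNReal.ofReal_le_ofReal (hline _ hx))

lemma ae_eq_of_integral_eq_of_supportingLine (hf : Integrable f ν)
    (hmean : ∫ x, f x ∂ν = ν.real univ * m) (hS : ∀ᵐ x ∂ν, f x ∈ S)
    (hline : ∀ t ∈ S, φ m + c * (t - m) ≤ φ t)
    (hstrict : ∀ t ∈ S, m < t → φ m + c * (t - m) < φ t)
    (hφf : Integrable (fun x => φ (f x)) ν) (heq : ∫ x, φ (f x) ∂ν = ν.real univ * φ m) :
    f =ᵐ[ν] fun _ => m := by
  have hlineInt : Integrable (fun x => φ m + c * (f x - m)) ν := integrable_add_mul_sub hf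
  have hgap : (fun x => φ (f x) - (φ m + c * (f x - m))) =ᵐ[ν] 0 := by
    refine (integral_eq_zero_iff_of_nonneg_ae (hS.mono fun x hx => sub_nonneg.mpr (hline _ hx))
      (hφf.sub hlineInt)).mp ?_
    rw [integral_sub hφf hlineInt, heq, integral_add_mul_sub_eq hf hmean, sub_self]
  have hle : ∀ᵐ x ∂ν, f x ≤ m := by
    filter_upwards [hS, hgap] with x hx hx0
    exact le_of_not_gt fun hlt => (hstrict _ hx hlt).ne' (sub_eq_zero.mp hx0)
  have hdev : (fun x => m - f x) =ᵐ[ν] 0 := by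
    refine (integral_eq_zero_iff_of_nonneg_ae (hle.mono fun x hx => sub_nonneg.mpr hx)
      ((integrable_const m).sub hf)).mp ?_
    rw [integral_sub (integrable_const m) hf, hmean, integral_const, smul_eq_mul, sub_self]
  filter_upwards [hdev] with x hx
  exact (sub_eq_zero.mp hx).symm

lemma lintegral_eq_iff_ae_eq_of_supportingLine (hf : Integrable f ν)
    (hmean : ∫ x, f x ∂ν = ν.real univ * m) (hS : ∀ᵐ x ∂ν, f x ∈ S)
    (hline : ∀ t ∈ S, φ m + c * (t - m) ≤ φ t)
    (hstrict : ∀ t ∈ S, m < t → φ m + c * (t - m) < φ t)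
    (hφf : AEStronglyMeasurable (fun x => φ (f x)) ν) (hφ0 : ∀ t ∈ S, 0 ≤ φ t) (hmS : m ∈ S) :
    ∫⁻ x, ENNReal.ofReal (φ (f x)) ∂ν = ENNReal.ofReal (ν.real univ * φ m) ↔
      f =ᵐ[ν] fun _ => m := by
  constructor
  · intro h
    have hnn : 0 ≤ᵐ[ν] fun x => φ (f x) := hS.mono fun x hx => hφ0 _ hx
    have hint : Integrable (fun x => φ (f x)) ν :=
      ⟨hφf, (hasFiniteIntegral_iff_ofReal hnn).mpr (h ▸ ENNReal.ofReal_lt_top)⟩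
    rw [← ofReal_integral_eq_lintegral_ofReal hint hnn, ENNReal.ofReal_eq_ofReal_iff
      (integral_nonneg_of_ae hnn) (mul_nonneg measureReal_nonneg (hφ0 m hmS))] at h
    exact ae_eq_of_integral_eq_of_supportingLine hf hmean hS hline hstrict hint h
  · intro h
    rw [lintegral_congr_ae (h.mono fun x hx => by rw [hx]), lintegral_const,
      ENNReal.ofReal_mul measureReal_nonneg, ofReal_measureReal, mul_comm]

end SupportingLine

theorem minimizer_large_velocity_general
    (pc ps : ℝ) (hpc : 0 < pc) (mu R : ℝ → ℝ)
    (hc : ContinuousOn mu (Set.Ici 0))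
    (hpos : ∀ p, 0 ≤ p → 0 < mu p)
    (hanti : StrictAntiOn mu (Set.Icc 0 pc))
    (hmono : StrictMonoOn mu (Set.Ici pc))
    (hps : pc < ps) (hps_eq : (∫ s in (0:ℝ)..ps, mu s) = ps * mu ps)
    (hR : ∀ p, R p = ∫ s in (0:ℝ)..p, mu s)
    (H vinf : ℝ) (hH : 0 < H) (hv : ps * H ≤ vinf)
    (π : ℝ → ℝ)
    (hint : IntegrableOn π (Set.Icc (-H) H))
    (hnn : ∀ x ∈ Set.Icc (-H) H, 0 ≤ π x)
    (hconstraint : (∫ x in Set.Icc (-H) H, π x) = 2 * vinf) :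
    ENNReal.ofReal (2 * H * R (vinf / H))
      ≤ (∫⁻ x in Set.Icc (-H) H, ENNReal.ofReal (R (π x))) ∧
    ((∫⁻ x in Set.Icc (-H) H, ENNReal.ofReal (R (π x)))
        = ENNReal.ofReal (2 * H * R (vinf / H)) ↔
      ∀ᵐ x ∂(volume.restrict (Set.Icc (-H) H)), π x = vinf / H) := by
  have hvol : (volume.restrict (Icc (-H) H)).real univ = 2 * H := by
    simp only [measureReal_restrict_apply_univ, Real.volume_real_Icc]
    rw [max_eq_left (by linarith)]
    ring
  rw [← hvol]
  set m := vinf / H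
  have hps0 : 0 ≤ ps := (hpc.trans hps).le
  have hm : ps ≤ m := (le_div_iff₀ hH).mpr hv
  have hmean : ∫ x in Icc (-H) H, π x = (volume.restrict (Icc (-H) H)).real univ * m := by
    rw [hvol, hconstraint, mul_assoc, mul_div_cancel₀ vinf hH.ne']
  have hS : ∀ᵐ x ∂(volume.restrict (Icc (-H) H)), π x ∈ Ici 0 :=
    (ae_restrict_iff' measurableSet_Icc).mpr (ae_of_all _ hnn)
  have hline : ∀ t ∈ Ici 0, R m + mu m * (t - m) ≤ R t := fun t ht => by
    simpa only [hR] using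
      integral_add_mul_sub_le_integral hc hanti.antitoneOn hmono.monotoneOn hps0 hps.le hps_eq hm ht
  have hstrict : ∀ t ∈ Ici 0, m < t → R m + mu m * (t - m) < R t := fun t _ hlt => by
    simpa only [hR] using
      integral_add_mul_sub_lt_integral hc hmono (hps.le.trans hm) (hps0.trans hm) hlt
  have hRπ : AEStronglyMeasurable (fun x => R (π x)) (volume.restrict (Icc (-H) H)) := by
    simpa only [hR] using aestronglyMeasurable_integral_comp hc hint.aestronglyMeasurable hS
  have hR0 : ∀ t ∈ Ici 0, 0 ≤ R t := fun t ht => by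
    simpa only [hR] using intervalIntegral.integral_nonneg ht fun s hs => (hpos s hs.1).le
  exact ⟨ofReal_le_lintegral_of_supportingLine hint hmean hS hline,
    lintegral_eq_iff_ae_eq_of_supportingLine hint hmean hS hline hstrict hRπ hR0 (hps0.trans hm)⟩

/-- unique minimizer for large shear velocity.
With `R(π) = ∫₀^π μ̃` and `v∞ ≥ π*·H`, every integrable `π : [-H,H] → [0,∞)`
with `∫ π = 2 v∞` satisfies `∫ R(π(x)) dx ≥ 2H·R(v∞/H)`, with equality if
and only if `π = v∞/H` almost everywhere. -/
theorem minimizer_large_velocity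
    (pc ps : ℝ) (hpc : 0 < pc) (mu R : ℝ → ℝ)
    (hc : ContinuousOn mu (Set.Ici 0))
    (hpos : ∀ p, 0 ≤ p → 0 < mu p)
    (hanti : StrictAntiOn mu (Set.Icc 0 pc))
    (hmono : StrictMonoOn mu (Set.Ici pc))
    (htop : Tendsto mu atTop atTop)
    (hps : pc < ps) (hps_eq : (∫ s in (0:ℝ)..ps, mu s) = ps * mu ps)
    (hR : ∀ p, R p = ∫ s in (0:ℝ)..p, mu s)
    (H vinf : ℝ) (hH : 0 < H) (hv : ps * H ≤ vinf)
    (π : ℝ → ℝ)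
    (hint : IntegrableOn π (Set.Icc (-H) H))
    (hnn : ∀ x ∈ Set.Icc (-H) H, 0 ≤ π x)
    (hconstraint : (∫ x in Set.Icc (-H) H, π x) = 2 * vinf) :
    ENNReal.ofReal (2 * H * R (vinf / H))
      ≤ (∫⁻ x in Set.Icc (-H) H, ENNReal.ofReal (R (π x))) ∧
    ((∫⁻ x in Set.Icc (-H) H, ENNReal.ofReal (R (π x)))
        = ENNReal.ofReal (2 * H * R (vinf / H)) ↔
      ∀ᵐ x ∂(volume.restrict (Set.Icc (-H) H)), π x = vinf / H) :=
  minimizer_large_velocity_general pc ps hpc mu R hc hpos hanti hmono hps hps_eq hR H vinf hH hv π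
    hint hnn hconstraint
end

section
/- (Unique steady state of the 1-degree-of-freedom slider.) Let μ0 > 0, let A : ℝ → [0,∞) be continuous and even with A(0) = 0, strictly increasing on [0,∞) and unbounded, let B : ℝ → [0,∞), and set μ(π,θ) = μ0 + A(π) + B(θ). Let Π(σ,θ) denote the unique π with σ ∈ μ(π,θ)·Sign(π). Let h > 0, θ∞ > 0 and v∞ > 0. Then a pair (σ, θ) ∈ ℝ² satisfies the steady-state equations v∞ = h·Π(σ,θ) and 1 − θ/θ∞ − 10·Π(σ,θ)·θ = 0 if and only if θ = θ∞/(1 + 10 (v∞/h) θ∞) and σ = μ0 + A(v∞/h) + B(θ∞/(1 + 10 (v∞/h) θ∞)); in particular the steady state is unique. -/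
/-! The slip equation forces `Π(σ,θ) = v∞/h > 0`, where `Sign` is `{1}`, so the friction law
reduces to `σ = μ(v∞/h, θ)`; the state equation is then linear in `θ`. -/

open MeasureTheory Set Filter

noncomputable section

lemma signSet_of_pos {p : ℝ} (hp : 0 < p) : SignSet p = {1} := if_pos hp

lemma exists_mem_signSet_mul_iff_of_pos {p σ m : ℝ} (hp : 0 < p) :
    (∃ ξ ∈ SignSet p, σ = m * ξ) ↔ σ = m := by
  simp [signSet_of_pos hp]

lemma eq_iff_of_forall_signSet_solution {μ P : ℝ → ℝ → ℝ}
    (hP : ∀ σ t : ℝ, (∃ ξ ∈ SignSet (P σ t), σ = μ (P σ t) t * ξ) ∧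
      ∀ p : ℝ, (∃ ξ ∈ SignSet p, σ = μ p t * ξ) → p = P σ t)
    {σ t p : ℝ} (hp : 0 < p) : P σ t = p ↔ σ = μ p t := by
  constructor
  · rintro rfl
    exact (exists_mem_signSet_mul_iff_of_pos hp).1 (hP σ t).1
  · exact fun hσ => ((hP σ t).2 p ((exists_mem_signSet_mul_iff_of_pos hp).2 hσ)).symm

lemma one_sub_div_sub_mul_eq_zero_iff {θ k t : ℝ} (hθ : θ ≠ 0) (hkθ : 1 + k * θ ≠ 0) :
    1 - t / θ - k * t = 0 ↔ t = θ / (1 + k * θ) := by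
  rw [eq_div_iff hkθ]
  field_simp
  constructor <;> intro h <;> linarith

theorem slider_unique_steady_state_general
    (μ0 : ℝ) (A B : ℝ → ℝ)
    (Pmap : ℝ → ℝ → ℝ)
    (hPmap : ∀ σ t : ℝ,
      (∃ ξ ∈ SignSet (Pmap σ t), σ = (μ0 + A (Pmap σ t) + B t) * ξ) ∧
      ∀ p : ℝ, (∃ ξ ∈ SignSet p, σ = (μ0 + A p + B t) * ξ) → p = Pmap σ t)
    (h θinf vinf : ℝ) (hh : 0 < h) (hθinf : 0 < θinf) (hvinf : 0 < vinf) :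
    ∀ σ t : ℝ,
      (vinf = h * Pmap σ t ∧ 1 - t / θinf - 10 * Pmap σ t * t = 0) ↔
      (t = θinf / (1 + 10 * (vinf / h) * θinf) ∧
        σ = μ0 + A (vinf / h) + B (θinf / (1 + 10 * (vinf / h) * θinf))) := by
  intro σ t
  have hp : 0 < vinf / h := div_pos hvinf hh
  have hden : 1 + 10 * (vinf / h) * θinf ≠ 0 := by positivity
  have hslip : vinf = h * Pmap σ t ↔ Pmap σ t = vinf / h := by
    rw [eq_div_iff hh.ne', mul_comm, eq_comm]
  have hstress := eq_iff_of_forall_signSet_solution (μ := fun p t => μ0 + A p + B t) hPmap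
    (σ := σ) (t := t) hp
  rw [hslip]
  constructor
  · rintro ⟨hP, hθ⟩
    rw [hP, one_sub_div_sub_mul_eq_zero_iff hθinf.ne' hden] at hθ
    exact ⟨hθ, hθ ▸ hstress.1 hP⟩
  · rintro ⟨hθ, hσ⟩
    have hP := hstress.2 (hθ ▸ hσ)
    exact ⟨hP, hP ▸ (one_sub_div_sub_mul_eq_zero_iff hθinf.ne' hden).2 hθ⟩

/-- unique steady state of the 1-degree-of-freedom slider.
With `μ(π,θ) = μ0 + A(π) + B(θ)` and `Π(σ,θ)` the unique `π` with
`σ ∈ μ(π,θ)·Sign(π)`, a pair `(σ,θ)` solves the steady-state equations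
`v∞ = h·Π(σ,θ)` and `1 - θ/θ∞ - 10·Π(σ,θ)·θ = 0` if and only if
`θ = θ∞/(1 + 10 (v∞/h) θ∞)` and `σ = μ0 + A(v∞/h) + B(θ∞/(1 + 10 (v∞/h) θ∞))`;
in particular the steady state is unique. -/
theorem slider_unique_steady_state
    (μ0 : ℝ) (hμ0 : 0 < μ0) (A B : ℝ → ℝ)
    (hAc : Continuous A) (hAnn : ∀ p, 0 ≤ A p) (hAeven : ∀ p, A (-p) = A p)
    (hA0 : A 0 = 0) (hAmono : StrictMonoOn A (Set.Ici (0:ℝ)))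
    (hAunbdd : ¬ BddAbove (Set.range A))
    (hBnn : ∀ t, 0 ≤ B t)
    (Pmap : ℝ → ℝ → ℝ)
    (hPmap : ∀ σ t : ℝ,
      (∃ ξ ∈ SignSet (Pmap σ t), σ = (μ0 + A (Pmap σ t) + B t) * ξ) ∧
      ∀ p : ℝ, (∃ ξ ∈ SignSet p, σ = (μ0 + A p + B t) * ξ) → p = Pmap σ t)
    (h θinf vinf : ℝ) (hh : 0 < h) (hθinf : 0 < θinf) (hvinf : 0 < vinf) :
    ∀ σ t : ℝ,
      (vinf = h * Pmap σ t ∧ 1 - t / θinf - 10 * Pmap σ t * t = 0) ↔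
      (t = θinf / (1 + 10 * (vinf / h) * θinf) ∧
        σ = μ0 + A (vinf / h) + B (θinf / (1 + 10 * (vinf / h) * θinf))) :=
  slider_unique_steady_state_general μ0 A B Pmap hPmap h θinf vinf hh hθinf hvinf
end
end

section
/- (Pointwise limit of even, monotone steady states as the aging length scale κ → 0.) Let H > 0, θ∞ > 0, v∞ > 0. Let μ : ℝ² → ℝ be continuous with π ↦ μ(π,θ) nondecreasing on [0,∞) for every θ and inf_θ μ(0,θ) > 0, and assume the superlinearity condition: there is a continuous Φ : [0,∞) → [0,∞) with Φ(r)/r → ∞ as r → ∞ and ∫₀^{r} μ(s,θ) ds ≥ Φ(r) for all r ≥ 0 and all θ ∈ ℝ. Let f0, f1 : ℝ → ℝ be continuous. Let κ_n → 0⁺ and suppose for each n there are σ_n ∈ ℝ, a twice continuously differentiable θ_n : [−H,H] → ℝ and a continuous π_n : [−H,H] → [0,∞) such that: θ_n and π_n are even, θ_n is nondecreasing on [0,H] with 0 ≤ θ_n ≤ θ∞ and θ_n(±H) = θ∞, π_n is nonincreasing on [0,H] with ∫_{−H}^{H} π_n(x) dx = 2 v∞; for every x ∈ (−H,H), κ_n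 θ_n''(x) = π_n(x) f1(θ_n(x)) − f0(θ_n(x)); and for every x ∈ [−H,H] there is ξ ∈ Sign(π_n(x)) with μ(π_n(x), θ_n(x))·ξ = σ_n. Then there exist a subsequence (n_k), a real number σ⁰, and measurable functions θ⁰, π⁰ : [−H,H] → ℝ with θ⁰ even and nondecreasing on [0,H], π⁰ even and nonincreasing on [0,H], such that σ_{n_k} → σ⁰, θ_{n_k}(x) → θ⁰(x) and π_{n_k}(x) → π⁰(x) for almost every x ∈ [−H,H], π⁰ is Lebesgue integrable with ∫_{−H}^{H} π⁰(x) dx = 2 v∞, and for almost every x ∈ [−H,H]: f0(θ⁰(x)) = π⁰(x)·f1(θ⁰(x)) and there exists ξ ∈ Sign(π⁰(x)) with μ(π⁰(x), θ⁰(x))·ξ = σ⁰. -/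
/-!
Evaluating the flow rule at `x = H`, where the even, inward-decreasing `π_n` is smallest and hence
`π_n(H) ≤ v∞/H`, bounds `|σ_n|`; the superlinear growth of `∫₀^r μ(s, θ) ds` then forces
`μ(π_n, θ_n) = σ_n` to keep `π_n` uniformly bounded. Helly's selection theorem for the monotone
halves of `θ_n` and `π_n`, together with Bolzano–Weierstrass for `σ_n`, yields a subsequence
converging almost everywhere. The constraint `∫ π = 2v∞` passes to the limit by dominated
convergence, and the flow rule does because the graph of `(p, m) ↦ m · Sign(p)` is closed.
For the aging relation, `g_n = π_n f1(θ_n) - f0(θ_n) = κ_n θ_n''` with `θ_n'(0) = 0` by evenness,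
so the double primitive `∫₀^y ∫₀^x g_n = κ_n (θ_n(y) - θ_n(0))` tends to `0`. Hence the double
primitive of the a.e. limit `g` vanishes, and differentiating twice (Lebesgue differentiation)
gives `g = 0` almost everywhere.
-/

open MeasureTheory Set Filter

noncomputable section

open scoped Topology

theorem eq_one_of_mem_signSet {p ξ : ℝ} (hp : 0 < p) (hξ : ξ ∈ SignSet p) : ξ = 1 := by
  simpa [SignSet, hp] using hξ

theorem eq_neg_one_of_mem_signSet {p ξ : ℝ} (hp : p < 0) (hξ : ξ ∈ SignSet p) : ξ = -1 := by
  simpa [SignSet, hp, not_lt.2 hp.le] using hξ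

theorem abs_mul_le_of_mem_signSet {p m ξ : ℝ} (hξ : ξ ∈ SignSet p) : |m * ξ| ≤ |m| := by
  have hξ' : |ξ| ≤ 1 := by
    unfold SignSet at hξ
    split_ifs at hξ <;> simp_all [abs_le]
  simpa [abs_mul] using mul_le_mul_of_nonneg_left hξ' (abs_nonneg m)

theorem exists_mem_Icc_mul_eq_of_abs_le {m s : ℝ} (h : |s| ≤ |m|) :
    ∃ ξ ∈ Icc (-1 : ℝ) 1, m * ξ = s := by
  rcases eq_or_ne m 0 with rfl | hm
  · exact ⟨0, by norm_num, by simpa using (abs_nonpos_iff.1 (by simpa using h)).symm⟩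
  · refine ⟨s / m, abs_le.1 ?_, mul_div_cancel₀ s hm⟩
    rw [abs_div]
    exact div_le_one_of_le₀ h (abs_nonneg m)

theorem exists_mem_signSet_of_tendsto {ι : Type*} {l : Filter ι} [l.NeBot] {p m s : ι → ℝ}
    {p₀ m₀ s₀ : ℝ} (hp : Tendsto p l (𝓝 p₀)) (hm : Tendsto m l (𝓝 m₀))
    (hs : Tendsto s l (𝓝 s₀)) (h : ∀ i, ∃ ξ ∈ SignSet (p i), m i * ξ = s i) :
    ∃ ξ ∈ SignSet p₀, m₀ * ξ = s₀ := by
  rcases lt_trichotomy p₀ 0 with hp₀ | rfl | hp₀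
  · have hsm : ∀ᶠ i in l, -m i = s i := by
      filter_upwards [hp.eventually (gt_mem_nhds hp₀)] with i hi
      obtain ⟨ξ, hξ, hmξ⟩ := h i
      simpa [eq_neg_one_of_mem_signSet hi hξ] using hmξ
    refine ⟨-1, by simp [SignSet, hp₀, not_lt.2 hp₀.le], ?_⟩
    simpa using tendsto_nhds_unique (hm.neg.congr' hsm) hs
  · have hle : |s₀| ≤ |m₀| := le_of_tendsto_of_tendsto' hs.abs hm.abs fun i => by
      obtain ⟨ξ, hξ, hmξ⟩ := h i
      exact hmξ ▸ abs_mul_le_of_mem_signSet hξ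
    simpa [SignSet] using exists_mem_Icc_mul_eq_of_abs_le hle
  · have hsm : ∀ᶠ i in l, m i = s i := by
      filter_upwards [hp.eventually (lt_mem_nhds hp₀)] with i hi
      obtain ⟨ξ, hξ, hmξ⟩ := h i
      simpa [eq_one_of_mem_signSet hi hξ] using hmξ
    exact ⟨1, by simp [SignSet, hp₀], by simpa using tendsto_nhds_unique (hm.congr' hsm) hs⟩

theorem exists_bound_of_mem_signSet {μ : ℝ → ℝ → ℝ}
    (hμ : Continuous (fun q : ℝ × ℝ => μ q.1 q.2)) {K : Set (ℝ × ℝ)} (hK : IsCompact K)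
    {p t s : ℕ → ℝ} (hpt : ∀ n, (p n, t n) ∈ K)
    (h : ∀ n, ∃ ξ ∈ SignSet (p n), μ (p n) (t n) * ξ = s n) : ∃ C, ∀ n, |s n| ≤ C := by
  obtain ⟨C, hC⟩ := hK.exists_bound_of_continuousOn hμ.continuousOn
  refine ⟨C, fun n => ?_⟩
  obtain ⟨ξ, hξ, hμξ⟩ := h n
  exact hμξ ▸ (abs_mul_le_of_mem_signSet hξ).trans (hC _ (hpt n))

theorem exists_forall_lt_of_superlinear {μ : ℝ → ℝ → ℝ} {Φ : ℝ → ℝ}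
    (hμ : ∀ t, MonotoneOn (fun p => μ p t) (Ici 0))
    (hΦ : Tendsto (fun r => Φ r / r) atTop atTop)
    (hΦμ : ∀ r, 0 ≤ r → ∀ t, Φ r ≤ ∫ s in (0:ℝ)..r, μ s t) (C : ℝ) :
    ∃ M > 0, ∀ r ≥ M, ∀ t, C < μ r t := by
  obtain ⟨M, hM⟩ :=
    ((hΦ.eventually_gt_atTop C).and (eventually_gt_atTop 0)).exists_forall_of_atTop
  refine ⟨M, (hM M le_rfl).2, fun r hr t => ?_⟩
  obtain ⟨hCΦ, hr0⟩ := hM r hr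
  have hμr : ∫ s in (0:ℝ)..r, μ s t ≤ r * μ r t := by
    have hmono : MonotoneOn (fun s => μ s t) (uIcc 0 r) :=
      (hμ t).mono (by rw [uIcc_of_le hr0.le]; exact Icc_subset_Ici_self)
    simpa using intervalIntegral.integral_mono_on hr0.le (hmono.intervalIntegrable (μ := volume))
      intervalIntegrable_const fun s hs => hμ t hs.1 hr0.le hs.2
  rw [lt_div_iff₀ hr0] at hCΦ
  nlinarith [hΦμ r hr0.le t]

theorem lt_of_mem_signSet_of_forall_lt {μ : ℝ → ℝ → ℝ} {C M p t s : ℝ} (hM : 0 < M)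
    (hμ : ∀ r ≥ M, ∀ t, C < μ r t) (hs : |s| ≤ C) (h : ∃ ξ ∈ SignSet p, μ p t * ξ = s) :
    p < M := by
  by_contra! hpM
  obtain ⟨ξ, hξ, hμξ⟩ := h
  rw [eq_one_of_mem_signSet (hM.trans_le hpM) hξ, mul_one] at hμξ
  linarith [hμ p hpM t, le_abs_self s]

theorem abs_mem_Icc_of_mem_Icc_neg {H x : ℝ} (hx : x ∈ Icc (-H) H) : |x| ∈ Icc 0 H :=
  ⟨abs_nonneg x, abs_le.2 hx⟩

theorem apply_abs_of_even {f : ℝ → ℝ} {H x : ℝ} (heven : ∀ x ∈ Icc (-H) H, f (-x) = f x)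
    (hx : x ∈ Icc (-H) H) : f |x| = f x := by
  rcases abs_choice x with h | h <;> rw [h]
  exact heven x hx

theorem two_mul_mul_le_integral_of_even_antitoneOn {f : ℝ → ℝ} {H : ℝ} (hH : 0 ≤ H)
    (hf : IntervalIntegrable f volume (-H) H) (heven : ∀ x ∈ Icc (-H) H, f (-x) = f x)
    (hanti : AntitoneOn f (Icc 0 H)) : 2 * H * f H ≤ ∫ x in (-H)..H, f x := by
  have := intervalIntegral.integral_mono_on (by linarith) intervalIntegrable_const hf fun x hx =>
    apply_abs_of_even heven hx ▸ hanti (abs_mem_Icc_of_mem_Icc_neg hx) ⟨hH, le_rfl⟩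
      (abs_mem_Icc_of_mem_Icc_neg hx).2
  rwa [intervalIntegral.integral_const, smul_eq_mul, sub_neg_eq_add, ← two_mul] at this

theorem ae_restrict_Icc_neg_abs {P : ℝ → Prop} {H : ℝ}
    (h : ∀ᵐ x ∂volume.restrict (Icc 0 H), P x) : ∀ᵐ x ∂volume.restrict (Icc (-H) H), P |x| := by
  rw [ae_restrict_iff' measurableSet_Icc] at h ⊢
  filter_upwards [h, (Measure.measurePreserving_neg volume).quasiMeasurePreserving.ae h]
    with x h₁ h₂ hx
  have hx' := abs_mem_Icc_of_mem_Icc_neg hx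
  rcases abs_choice x with h | h <;> rw [h] at hx' ⊢
  exacts [h₁ hx', h₂ hx']

theorem exists_monotone_tendsto_of_tendsto_rat {F : ℕ → ℝ → ℝ} {a b : ℝ} {L : ℚ → ℝ}
    (hmono : ∀ k, Monotone (F k)) (hbd : ∀ k x, F k x ∈ Icc a b)
    (hL : ∀ q : ℚ, Tendsto (fun k => F k q) atTop (𝓝 (L q))) :
    ∃ f : ℝ → ℝ, Monotone f ∧ (∀ x, f x ∈ Icc a b) ∧
      ∀ x, ContinuousAt f x → Tendsto (fun k => F k x) atTop (𝓝 (f x)) := by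
  have hLbd : ∀ q, L q ∈ Icc a b := fun q =>
    isClosed_Icc.mem_of_tendsto (hL q) (Eventually.of_forall fun k => hbd k q)
  have hne : ∀ x : ℝ, (L '' {q : ℚ | x < (q : ℝ)}).Nonempty := fun x =>
    let ⟨q, hq⟩ := exists_rat_gt x; ⟨L q, q, hq, rfl⟩
  have hbdd : ∀ x : ℝ, BddBelow (L '' {q : ℚ | x < (q : ℝ)}) := fun x =>
    ⟨a, by rintro _ ⟨q, -, rfl⟩; exact (hLbd q).1⟩
  set f : ℝ → ℝ := fun x => sInf (L '' {q : ℚ | x < (q : ℝ)})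
  have hfL : ∀ (x : ℝ) (q : ℚ), x < q → f x ≤ L q := fun x q hq =>
    csInf_le (hbdd x) ⟨q, hq, rfl⟩
  refine ⟨f, fun x y hxy => csInf_le_csInf (hbdd x) (hne y) (image_mono fun q hq =>
    hxy.trans_lt hq), fun x => ⟨le_csInf (hne x) ?_, ?_⟩,
    fun x hx => tendsto_order.2 ⟨fun c hc => ?_, fun c hc => ?_⟩⟩
  · rintro _ ⟨q, -, rfl⟩
    exact (hLbd q).1
  · obtain ⟨q, hq⟩ := exists_rat_gt x
    exact (hfL x q hq).trans (hLbd q).2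
  · obtain ⟨y, hcy, hyx⟩ := ((hx.eventually (lt_mem_nhds hc)).filter_mono nhdsWithin_le_nhds
      |>.and (self_mem_nhdsWithin : Iio x ∈ 𝓝[<] x)).exists
    obtain ⟨p, hyp, hpx⟩ := exists_rat_btwn hyx
    filter_upwards [(hL p).eventually (lt_mem_nhds (hcy.trans_le (hfL y p hyp)))] with k hk
    exact hk.trans_le (hmono k hpx.le)
  · obtain ⟨_, ⟨q, hxq, rfl⟩, hqc⟩ := exists_lt_of_csInf_lt (hne x) hc
    filter_upwards [(hL q).eventually (gt_mem_nhds hqc)] with k hk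
    exact (hmono k (le_of_lt hxq)).trans_lt hk

/-- Helly's selection theorem. -/
theorem exists_subseq_tendsto_of_monotone {F : ℕ → ℝ → ℝ} {a b : ℝ}
    (hmono : ∀ n, Monotone (F n)) (hbd : ∀ n x, F n x ∈ Icc a b) :
    ∃ φ : ℕ → ℕ, StrictMono φ ∧ ∃ f : ℝ → ℝ, Monotone f ∧ (∀ x, f x ∈ Icc a b) ∧
      ∀ x, ContinuousAt f x → Tendsto (fun k => F (φ k) x) atTop (𝓝 (f x)) := by
  obtain ⟨L, -, φ, hφ, hL⟩ :=
    (isCompact_univ_pi fun _ : ℚ => isCompact_Icc (a := a) (b := b)).tendsto_subseq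
      (x := fun n (q : ℚ) => F n q) fun n q _ => hbd n q
  exact ⟨φ, hφ, exists_monotone_tendsto_of_tendsto_rat (fun k => hmono (φ k))
    (fun k => hbd (φ k)) fun q => tendsto_pi_nhds.1 hL q⟩

theorem exists_subseq_ae_tendsto_of_even_monotoneOn {H a b : ℝ} (hH : 0 ≤ H) {u : ℕ → ℝ → ℝ}
    (heven : ∀ n, ∀ x ∈ Icc (-H) H, u n (-x) = u n x) (hmono : ∀ n, MonotoneOn (u n) (Icc 0 H))
    (hbd : ∀ n, ∀ x ∈ Icc 0 H, u n x ∈ Icc a b) :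
    ∃ φ : ℕ → ℕ, StrictMono φ ∧ ∃ u₀ : ℝ → ℝ, Measurable u₀ ∧ (∀ x, u₀ (-x) = u₀ x) ∧
      MonotoneOn u₀ (Icc 0 H) ∧ (∀ x, u₀ x ∈ Icc a b) ∧
      ∀ᵐ x ∂volume.restrict (Icc (-H) H), Tendsto (fun k => u (φ k) x) atTop (𝓝 (u₀ x)) := by
  have hclamp : ∀ x, (projIcc 0 H hH x : ℝ) ∈ Icc 0 H := fun x => Subtype.prop _
  obtain ⟨φ, hφ, f, hf, hfbd, hconv⟩ := exists_subseq_tendsto_of_monotone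
    (F := fun n x => u n (projIcc 0 H hH x))
    (fun n x y hxy => hmono n (hclamp x) (hclamp y) (monotone_projIcc hH hxy))
    fun n x => hbd n _ (hclamp x)
  refine ⟨φ, hφ, fun x => f |x|, hf.measurable.comp measurable_abs,
    fun x => by simp only [abs_neg], fun x hx y hy hxy => ?_, fun x => hfbd _, ?_⟩
  · simp only [abs_of_nonneg hx.1, abs_of_nonneg hy.1]
    exact hf hxy
  · have hcont : ∀ᵐ x ∂volume.restrict (Icc (-H) H), ContinuousAt f |x| :=
      ae_restrict_Icc_neg_abs <| ae_restrict_of_ae <| by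
        simpa using hf.countable_not_continuousAt.ae_notMem volume
    rw [ae_restrict_iff' measurableSet_Icc] at hcont ⊢
    filter_upwards [hcont] with x hx hxH
    simpa [projIcc_of_mem hH (abs_mem_Icc_of_mem_Icc_neg hxH), apply_abs_of_even (heven _) hxH]
      using hconv |x| (hx hxH)

theorem exists_subseq_ae_tendsto_of_even_antitoneOn {H a b : ℝ} (hH : 0 ≤ H) {u : ℕ → ℝ → ℝ}
    (heven : ∀ n, ∀ x ∈ Icc (-H) H, u n (-x) = u n x) (hanti : ∀ n, AntitoneOn (u n) (Icc 0 H))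
    (hbd : ∀ n, ∀ x ∈ Icc 0 H, u n x ∈ Icc a b) :
    ∃ φ : ℕ → ℕ, StrictMono φ ∧ ∃ u₀ : ℝ → ℝ, Measurable u₀ ∧ (∀ x, u₀ (-x) = u₀ x) ∧
      AntitoneOn u₀ (Icc 0 H) ∧ (∀ x, u₀ x ∈ Icc a b) ∧
      ∀ᵐ x ∂volume.restrict (Icc (-H) H), Tendsto (fun k => u (φ k) x) atTop (𝓝 (u₀ x)) := by
  obtain ⟨φ, hφ, v, hvm, hveven, hvmono, hvbd, hv⟩ :=
    exists_subseq_ae_tendsto_of_even_monotoneOn (u := fun n x => -u n x) (a := -b) (b := -a) hH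
      (fun n x hx => by simp only [heven n x hx]) (fun n => (hanti n).neg)
      fun n x hx => by simpa [and_comm] using hbd n x hx
  refine ⟨φ, hφ, fun x => -v x, hvm.neg, fun x => by simp only [hveven], hvmono.neg,
    fun x => by simpa [neg_le, le_neg, and_comm] using hvbd x, ?_⟩
  filter_upwards [hv] with x hx
  simpa using hx.neg

theorem ae_eq_zero_of_ae_integral_eq_zero {g : ℝ → ℝ} {a b : ℝ}
    (hg : IntervalIntegrable g volume a b) (h : ∀ᵐ x, x ∈ Ioo a b → ∫ t in a..x, g t = 0) :
    ∀ᵐ x, x ∈ Ioo a b → g x = 0 := by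
  have hIoo : Ioo a b ⊆ uIcc a b := Ioo_subset_Icc_self.trans Icc_subset_uIcc
  have hG : EqOn (fun x => ∫ t in a..x, g t) 0 (Ioo a b) :=
    Measure.eqOn_Ioo_of_ae_eq volume ((ae_restrict_iff' measurableSet_Ioo).2 h)
      ((intervalIntegral.continuousOn_primitive_interval' hg left_mem_uIcc).mono hIoo)
      continuousOn_const
  filter_upwards [hg.ae_hasDerivAt_integral] with x hx hxab
  refine (hx (hIoo hxab) a left_mem_uIcc).unique ?_
  exact (hasDerivAt_const x 0).congr_of_eventuallyEq
    (eventually_of_mem (Ioo_mem_nhds hxab.1 hxab.2) hG)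

theorem tendsto_intervalIntegral_of_ae_tendsto {f : ℕ → ℝ → ℝ} {f₀ : ℝ → ℝ} {a b C : ℝ}
    (hab : a ≤ b) (hf : ∀ n, ContinuousOn (f n) (Icc a b))
    (hbd : ∀ n, ∀ x ∈ Icc a b, |f n x| ≤ C)
    (hlim : ∀ᵐ x, x ∈ Icc a b → Tendsto (fun n => f n x) atTop (𝓝 (f₀ x))) :
    Tendsto (fun n => ∫ x in a..b, f n x) atTop (𝓝 (∫ x in a..b, f₀ x)) := by
  refine intervalIntegral.tendsto_integral_filter_of_dominated_convergence (fun _ => C)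
    (Eventually.of_forall fun n => ?_) (Eventually.of_forall fun n => ?_)
    intervalIntegrable_const ?_
  · rw [uIoc_of_le hab]
    exact (hf n).aestronglyMeasurable measurableSet_Icc |>.mono_measure
      (Measure.restrict_mono Ioc_subset_Icc_self le_rfl)
  · exact ae_of_all _ fun x hx => hbd n x (Ioc_subset_Icc_self (by rwa [uIoc_of_le hab] at hx))
  · filter_upwards [hlim] with x hx hx'
    exact hx (Ioc_subset_Icc_self (by rwa [uIoc_of_le hab] at hx'))

theorem intervalIntegrable_of_ae_tendsto {f : ℕ → ℝ → ℝ} {f₀ : ℝ → ℝ} {a b C : ℝ}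
    (hab : a ≤ b) (hf : ∀ n, ContinuousOn (f n) (Icc a b))
    (hbd : ∀ n, ∀ x ∈ Icc a b, |f n x| ≤ C)
    (hlim : ∀ᵐ x, x ∈ Icc a b → Tendsto (fun n => f n x) atTop (𝓝 (f₀ x))) :
    IntervalIntegrable f₀ volume a b := by
  rw [intervalIntegrable_iff_integrableOn_Ioc_of_le hab]
  have hlim' : ∀ᵐ x ∂volume.restrict (Ioc a b), Tendsto (fun n => f n x) atTop (𝓝 (f₀ x)) :=
    (ae_restrict_iff' measurableSet_Ioc).2 (hlim.mono fun x hx hx' => hx (Ioc_subset_Icc_self hx'))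
  refine Integrable.of_bound (aestronglyMeasurable_of_tendsto_ae atTop (fun n =>
    ((hf n).aestronglyMeasurable measurableSet_Icc).mono_measure
      (Measure.restrict_mono Ioc_subset_Icc_self le_rfl)) hlim') C ?_
  filter_upwards [hlim', ae_restrict_mem measurableSet_Ioc] with x hx hx'
  exact le_of_tendsto' hx.norm fun n => hbd n x (Ioc_subset_Icc_self hx')

theorem ae_eq_zero_of_tendsto_integral_integral {a b C : ℝ} (hab : a ≤ b) {g : ℕ → ℝ → ℝ}
    {g₀ : ℝ → ℝ} (hgc : ∀ k, ContinuousOn (g k) (Icc a b)) (hbd : ∀ k, ∀ x ∈ Icc a b, |g k x| ≤ C)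
    (hlim : ∀ᵐ x, x ∈ Icc a b → Tendsto (fun k => g k x) atTop (𝓝 (g₀ x)))
    (h : ∀ y ∈ Ioo a b, Tendsto (fun k => ∫ x in a..y, ∫ t in a..x, g k t) atTop (𝓝 0)) :
    ∀ᵐ x, x ∈ Ioo a b → g₀ x = 0 := by
  have hsub : ∀ {y}, y ∈ Icc a b → Icc a y ⊆ Icc a b := fun hy => Icc_subset_Icc_right hy.2
  have hG : ∀ x ∈ Icc a b,
      Tendsto (fun k => ∫ t in a..x, g k t) atTop (𝓝 (∫ t in a..x, g₀ t)) := fun x hx =>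
    tendsto_intervalIntegral_of_ae_tendsto hx.1 (fun k => (hgc k).mono (hsub hx))
      (fun k t ht => hbd k t (hsub hx ht)) (hlim.mono fun t ht ht' => ht (hsub hx ht'))
  have hGk : ∀ k, ContinuousOn (fun x => ∫ t in a..x, g k t) (Icc a b) := fun k => by
    simpa [uIcc_of_le hab] using intervalIntegral.continuousOn_primitive_interval
      (((hgc k).mono (uIcc_of_le hab).subset).integrableOn_compact isCompact_uIcc)
  have hGbd : ∀ k, ∀ x ∈ Icc a b, |∫ t in a..x, g k t| ≤ C * (b - a) := fun k x hx => by
    have := intervalIntegral.norm_integral_le_of_norm_le_const (f := g k) (C := C) (a := a) (b := x)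
      fun t ht => hbd k t (hsub hx (Ioc_subset_Icc_self (by rwa [uIoc_of_le hx.1] at ht)))
    rw [Real.norm_eq_abs, abs_of_nonneg (sub_nonneg.2 hx.1)] at this
    have hC : 0 ≤ C := (abs_nonneg _).trans (hbd k a ⟨le_rfl, hab⟩)
    exact this.trans (mul_le_mul_of_nonneg_left (by linarith [hx.2]) hC)
  have hGG : ∀ᵐ y, y ∈ Ioo a b → ∫ x in a..y, ∫ t in a..x, g₀ t = 0 := ae_of_all _ fun y hy =>
    tendsto_nhds_unique (tendsto_intervalIntegral_of_ae_tendsto hy.1.le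
      (fun k => (hGk k).mono (hsub (Ioo_subset_Icc_self hy)))
      (fun k x hx => hGbd k x (hsub (Ioo_subset_Icc_self hy) hx))
      (ae_of_all _ fun x hx => hG x (hsub (Ioo_subset_Icc_self hy) hx))) (h y hy)
  have hg₀ : IntervalIntegrable g₀ volume a b := intervalIntegrable_of_ae_tendsto hab hgc hbd hlim
  have hG₀ : IntervalIntegrable (fun x => ∫ t in a..x, g₀ t) volume a b :=
    (intervalIntegral.continuousOn_primitive_interval' hg₀ left_mem_uIcc).intervalIntegrable
  exact ae_eq_zero_of_ae_integral_eq_zero hg₀ (ae_eq_zero_of_ae_integral_eq_zero hG₀ hGG)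

theorem integral_integral_eq_of_hasDerivAt {u u' u'' : ℝ → ℝ} {a b : ℝ} (hab : a ≤ b)
    (hu : ∀ x ∈ Icc a b, HasDerivAt u (u' x) x) (hu' : ∀ x ∈ Icc a b, HasDerivAt u' (u'' x) x)
    (hu'' : ContinuousOn u'' (Icc a b)) :
    ∫ x in a..b, ∫ t in a..x, u'' t = u b - u a - (b - a) * u' a := by
  rw [← uIcc_of_le hab] at hu hu' hu''
  have hinner : EqOn (fun x => ∫ t in a..x, u'' t) (fun x => u' x - u' a) (uIcc a b) :=
    fun x hx => by
      have hsub : uIcc a x ⊆ uIcc a b := uIcc_subset_uIcc_left hx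
      exact intervalIntegral.integral_eq_sub_of_hasDerivAt (fun t ht => hu' t (hsub ht))
        ((hu''.mono hsub).intervalIntegrable)
  have hu'c : ContinuousOn u' (uIcc a b) := fun x hx => (hu' x hx).continuousAt.continuousWithinAt
  rw [intervalIntegral.integral_congr hinner,
    intervalIntegral.integral_sub hu'c.intervalIntegrable intervalIntegrable_const,
    intervalIntegral.integral_eq_sub_of_hasDerivAt hu hu'c.intervalIntegrable,
    intervalIntegral.integral_const, smul_eq_mul]

theorem deriv_zero_of_eventually_even {f : ℝ → ℝ} (h : ∀ᶠ x in 𝓝 0, f (-x) = f x) :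
    deriv f 0 = 0 := by
  have : deriv (fun x => f (-x)) 0 = deriv f 0 := EventuallyEq.deriv_eq h
  rw [deriv_comp_neg, neg_zero] at this
  linarith

theorem integral_integral_eq_of_aging {θ g : ℝ → ℝ} {H κ y : ℝ}
    (hθ : ContDiffOn ℝ 2 θ (Icc (-H) H)) (heven : ∀ x ∈ Icc (-H) H, θ (-x) = θ x)
    (hg : ∀ x ∈ Ioo (-H) H,
      κ * derivWithin (derivWithin θ (Icc (-H) H)) (Icc (-H) H) x = g x)
    (hy : y ∈ Ico 0 H) :
    ∫ x in (0:ℝ)..y, ∫ t in (0:ℝ)..x, g t = κ * (θ y - θ 0) := by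
  set θ' := derivWithin θ (Icc (-H) H)
  have hH : -H < H := by linarith [hy.1, hy.2]
  have hsub : Icc 0 y ⊆ Ioo (-H) H := fun x hx => ⟨by linarith [hx.1], hx.2.trans_lt hy.2⟩
  have hnhds : ∀ x ∈ Icc 0 y, Icc (-H) H ∈ 𝓝 x := fun x hx =>
    Icc_mem_nhds (hsub hx).1 (hsub hx).2
  have hθ' : ContDiffOn ℝ 1 θ' (Icc (-H) H) := hθ.derivWithin (uniqueDiffOn_Icc hH) (by norm_num)
  have hderiv : ∀ {f : ℝ → ℝ}, ContDiffOn ℝ 1 f (Icc (-H) H) → ∀ x ∈ Icc 0 y,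
      HasDerivAt f (derivWithin f (Icc (-H) H) x) x := fun hf x hx =>
    ((hf.differentiableOn one_ne_zero) x (Ioo_subset_Icc_self (hsub hx))).hasDerivWithinAt
      |>.hasDerivAt (hnhds x hx)
  have hd : ∀ x ∈ Icc 0 y, HasDerivAt (fun x => κ * θ x) (κ * θ' x) x := fun x hx =>
    (hderiv (hθ.of_le one_le_two) x hx).const_mul κ
  have hd' : ∀ x ∈ Icc 0 y, HasDerivAt (fun x => κ * θ' x) (g x) x := fun x hx =>
    hg x (hsub hx) ▸ (hderiv hθ' x hx).const_mul κ
  have hgc : ContinuousOn g (Icc 0 y) :=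
    ((hθ'.continuousOn_derivWithin (uniqueDiffOn_Icc hH) le_rfl).const_smul κ).mono
      (hsub.trans Ioo_subset_Icc_self) |>.congr fun x hx => (hg x (hsub hx)).symm
  have hθ'0 : θ' 0 = 0 := by
    rw [show θ' 0 = _ from derivWithin_of_mem_nhds (hnhds 0 ⟨le_rfl, hy.1⟩)]
    exact deriv_zero_of_eventually_even (eventually_of_mem (hnhds 0 ⟨le_rfl, hy.1⟩) heven)
  rw [integral_integral_eq_of_hasDerivAt hy.1 hd hd' hgc, hθ'0]
  ring

theorem exists_uniform_bounds_of_steady_states {H θinf vinf : ℝ} (hH : 0 < H)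
    {μ : ℝ → ℝ → ℝ} (hμc : Continuous (fun q : ℝ × ℝ => μ q.1 q.2))
    (hμmono : ∀ t, MonotoneOn (fun p => μ p t) (Ici 0)) {Φ : ℝ → ℝ}
    (hΦsuper : Tendsto (fun r => Φ r / r) atTop atTop)
    (hΦbound : ∀ r, 0 ≤ r → ∀ t, Φ r ≤ ∫ s in (0:ℝ)..r, μ s t)
    {σ : ℕ → ℝ} {θ π : ℕ → ℝ → ℝ} (hπc : ∀ n, ContinuousOn (π n) (Icc (-H) H))
    (hπnn : ∀ n, ∀ x ∈ Icc (-H) H, 0 ≤ π n x) (hπeven : ∀ n, ∀ x ∈ Icc (-H) H, π n (-x) = π n x)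
    (hπanti : ∀ n, AntitoneOn (π n) (Icc 0 H)) (hπint : ∀ n, ∫ x in (-H)..H, π n x = 2 * vinf)
    (hθbd : ∀ n, ∀ x ∈ Icc (-H) H, 0 ≤ θ n x ∧ θ n x ≤ θinf)
    (hflow : ∀ n, ∀ x ∈ Icc (-H) H, ∃ ξ ∈ SignSet (π n x), μ (π n x) (θ n x) * ξ = σ n) :
    ∃ C M : ℝ, (∀ n, |σ n| ≤ C) ∧ ∀ n, ∀ x ∈ Icc (-H) H, π n x ∈ Icc 0 M := by
  have hHmem : H ∈ Icc (-H) H := ⟨by linarith, le_rfl⟩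
  have hπH : ∀ n, π n H ≤ vinf / H := fun n => by
    have := two_mul_mul_le_integral_of_even_antitoneOn hH.le
      ((hπc n).intervalIntegrable_of_Icc (by linarith)) (hπeven n) (hπanti n)
    rw [le_div_iff₀ hH]
    linarith [hπint n]
  obtain ⟨C, hσC⟩ := exists_bound_of_mem_signSet hμc (isCompact_Icc.prod isCompact_Icc)
    (fun n => ⟨⟨hπnn n H hHmem, hπH n⟩, hθbd n H hHmem⟩) fun n => hflow n H hHmem
  obtain ⟨M, hM, hμM⟩ := exists_forall_lt_of_superlinear hμmono hΦsuper hΦbound C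
  exact ⟨C, M, hσC, fun n x hx =>
    ⟨hπnn n x hx, (lt_of_mem_signSet_of_forall_lt hM hμM (hσC n) (hflow n x hx)).le⟩⟩

theorem exists_subseq_tendsto_of_even_monotone {H C a b c d : ℝ} (hH : 0 ≤ H) {σ : ℕ → ℝ}
    {θ π : ℕ → ℝ → ℝ} (hσ : ∀ n, |σ n| ≤ C)
    (hθeven : ∀ n, ∀ x ∈ Icc (-H) H, θ n (-x) = θ n x) (hθmono : ∀ n, MonotoneOn (θ n) (Icc 0 H))
    (hθbd : ∀ n, ∀ x ∈ Icc 0 H, θ n x ∈ Icc a b)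
    (hπeven : ∀ n, ∀ x ∈ Icc (-H) H, π n (-x) = π n x) (hπanti : ∀ n, AntitoneOn (π n) (Icc 0 H))
    (hπbd : ∀ n, ∀ x ∈ Icc 0 H, π n x ∈ Icc c d) :
    ∃ φ : ℕ → ℕ, StrictMono φ ∧ ∃ (σ₀ : ℝ) (θ₀ π₀ : ℝ → ℝ), Measurable θ₀ ∧ Measurable π₀ ∧
      (∀ x, θ₀ (-x) = θ₀ x ∧ π₀ (-x) = π₀ x) ∧
      MonotoneOn θ₀ (Icc 0 H) ∧ AntitoneOn π₀ (Icc 0 H) ∧ (∀ x, θ₀ x ∈ Icc a b ∧ π₀ x ∈ Icc c d) ∧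
      Tendsto (fun k => σ (φ k)) atTop (𝓝 σ₀) ∧
      ∀ᵐ x ∂volume.restrict (Icc (-H) H),
        Tendsto (fun k => θ (φ k) x) atTop (𝓝 (θ₀ x)) ∧
        Tendsto (fun k => π (φ k) x) atTop (𝓝 (π₀ x)) := by
  obtain ⟨φ₁, hφ₁, θ₀, hθm, hθe, hθmono₀, hθbd₀, hθlim⟩ :=
    exists_subseq_ae_tendsto_of_even_monotoneOn hH hθeven hθmono hθbd
  obtain ⟨φ₂, hφ₂, π₀, hπm, hπe, hπanti₀, hπbd₀, hπlim⟩ :=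
    exists_subseq_ae_tendsto_of_even_antitoneOn hH (fun n => hπeven (φ₁ n))
      (fun n => hπanti (φ₁ n)) fun n => hπbd (φ₁ n)
  obtain ⟨σ₀, -, φ₃, hφ₃, hσlim⟩ := tendsto_subseq_of_bounded (Metric.isBounded_Icc (-C) C)
    (x := fun n => σ (φ₁ (φ₂ n))) fun n => abs_le.1 (hσ _)
  refine ⟨φ₁ ∘ φ₂ ∘ φ₃, hφ₁.comp (hφ₂.comp hφ₃), σ₀, θ₀, π₀, hθm, hπm,
    fun x => ⟨hθe x, hπe x⟩, hθmono₀, hπanti₀, fun x => ⟨hθbd₀ x, hπbd₀ x⟩, hσlim, ?_⟩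
  filter_upwards [hθlim, hπlim] with x hθx hπx
  exact ⟨hθx.comp (hφ₂.comp hφ₃).tendsto_atTop, hπx.comp hφ₃.tendsto_atTop⟩

theorem ae_limit_aging_relation {H θinf M : ℝ} (hH : 0 ≤ H) {κ : ℕ → ℝ}
    (hκ : Tendsto κ atTop (𝓝 0)) {f0 f1 : ℝ → ℝ} (hf0 : Continuous f0) (hf1 : Continuous f1)
    {θ π : ℕ → ℝ → ℝ} {θ₀ π₀ : ℝ → ℝ} (hθ : ∀ n, ContDiffOn ℝ 2 (θ n) (Icc (-H) H))
    (hθeven : ∀ n, ∀ x ∈ Icc (-H) H, θ n (-x) = θ n x)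
    (hθbd : ∀ n, ∀ x ∈ Icc (-H) H, 0 ≤ θ n x ∧ θ n x ≤ θinf)
    (hπ : ∀ n, ContinuousOn (π n) (Icc (-H) H)) (hπbd : ∀ n, ∀ x ∈ Icc (-H) H, π n x ∈ Icc 0 M)
    (haging : ∀ n, ∀ x ∈ Ioo (-H) H,
      κ n * derivWithin (derivWithin (θ n) (Icc (-H) H)) (Icc (-H) H) x
        = π n x * f1 (θ n x) - f0 (θ n x))
    (hlim : ∀ᵐ x ∂volume.restrict (Icc (-H) H),
      Tendsto (fun n => θ n x) atTop (𝓝 (θ₀ x)) ∧ Tendsto (fun n => π n x) atTop (𝓝 (π₀ x)))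
    (heven₀ : ∀ x, θ₀ (-x) = θ₀ x ∧ π₀ (-x) = π₀ x) :
    ∀ᵐ x ∂volume.restrict (Icc (-H) H), f0 (θ₀ x) = π₀ x * f1 (θ₀ x) := by
  set g₀ : ℝ → ℝ := fun x => π₀ x * f1 (θ₀ x) - f0 (θ₀ x)
  have hIcc : Icc 0 H ⊆ Icc (-H) H := Icc_subset_Icc (by linarith) le_rfl
  obtain ⟨C, hC⟩ := (isCompact_Icc.prod isCompact_Icc).exists_bound_of_continuousOn
    (s := Icc 0 M ×ˢ Icc 0 θinf) (f := fun q : ℝ × ℝ => q.1 * f1 q.2 - f0 q.2) (by fun_prop)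
  have hzero : ∀ᵐ x, x ∈ Ioo 0 H → g₀ x = 0 := by
    refine ae_eq_zero_of_tendsto_integral_integral hH
      (g := fun n x => π n x * f1 (θ n x) - f0 (θ n x))
      (fun n => ((hπ n).mul (hf1.comp_continuousOn (hθ n).continuousOn)).sub
        (hf0.comp_continuousOn (hθ n).continuousOn) |>.mono hIcc)
      (fun n x hx => hC (π n x, θ n x) ⟨hπbd n x (hIcc hx), hθbd n x (hIcc hx)⟩)
      (((ae_restrict_iff' measurableSet_Icc).1 hlim).mono fun x hx hx' =>
        ((hx (hIcc hx')).2.mul ((hf1.tendsto _).comp (hx (hIcc hx')).1)).sub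
          ((hf0.tendsto _).comp (hx (hIcc hx')).1))
      fun y hy => ?_
    simp only [integral_integral_eq_of_aging (hθ _) (hθeven _) (haging _)
      (Ioo_subset_Ico_self hy)]
    refine hκ.zero_mul_isBoundedUnder_le (isBoundedUnder_of ⟨θinf, fun n => ?_⟩)
    have hy := hθbd n y (hIcc (Ioo_subset_Icc_self hy))
    have h0 := hθbd n 0 (hIcc ⟨le_rfl, hH⟩)
    exact abs_sub_le_iff.2 ⟨by linarith, by linarith⟩
  have hzero' : ∀ᵐ x ∂volume.restrict (Icc 0 H), g₀ x = 0 := by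
    rw [← Measure.restrict_congr_set Ioo_ae_eq_Icc]
    exact (ae_restrict_iff' measurableSet_Ioo).2 hzero
  filter_upwards [ae_restrict_Icc_neg_abs hzero'] with x hx
  have hg₀ : g₀ |x| = g₀ x := by
    rcases abs_choice x with h | h <;> simp only [g₀, h, (heven₀ x).1, (heven₀ x).2]
  have hx' : g₀ x = 0 := hg₀ ▸ hx
  exact (sub_eq_zero.1 hx').symm

theorem kappa_zero_limit_of_even_monotone_steady_states_general
    (H θinf vinf : ℝ) (hH : 0 < H)
    (μ : ℝ → ℝ → ℝ) (hμc : Continuous (fun q : ℝ × ℝ => μ q.1 q.2))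
    (hμmono : ∀ t, MonotoneOn (fun p => μ p t) (Set.Ici (0:ℝ)))
    (Φ : ℝ → ℝ)
    (hΦsuper : Tendsto (fun r => Φ r / r) atTop atTop)
    (hΦbound : ∀ r, 0 ≤ r → ∀ t : ℝ, Φ r ≤ ∫ s in (0:ℝ)..r, μ s t)
    (f0 f1 : ℝ → ℝ) (hf0c : Continuous f0) (hf1c : Continuous f1)
    (κ : ℕ → ℝ) (hκ0 : Tendsto κ atTop (nhds 0))
    (σn : ℕ → ℝ) (θn πn : ℕ → ℝ → ℝ)
    (hθc2 : ∀ n, ContDiffOn ℝ 2 (θn n) (Set.Icc (-H) H))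
    (hπc : ∀ n, ContinuousOn (πn n) (Set.Icc (-H) H))
    (hπnn : ∀ n, ∀ x ∈ Set.Icc (-H) H, 0 ≤ πn n x)
    (hθeven : ∀ n, ∀ x ∈ Set.Icc (-H) H, θn n (-x) = θn n x)
    (hπeven : ∀ n, ∀ x ∈ Set.Icc (-H) H, πn n (-x) = πn n x)
    (hθmono : ∀ n, MonotoneOn (θn n) (Set.Icc 0 H))
    (hθbdd : ∀ n, ∀ x ∈ Set.Icc (-H) H, 0 ≤ θn n x ∧ θn n x ≤ θinf)
    (hπmono : ∀ n, AntitoneOn (πn n) (Set.Icc 0 H))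
    (hπint : ∀ n, (∫ x in (-H)..H, πn n x) = 2 * vinf)
    (haging : ∀ n, ∀ x ∈ Set.Ioo (-H) H,
      κ n * derivWithin (derivWithin (θn n) (Set.Icc (-H) H)) (Set.Icc (-H) H) x
        = πn n x * f1 (θn n x) - f0 (θn n x))
    (hflow : ∀ n, ∀ x ∈ Set.Icc (-H) H,
      ∃ ξ ∈ SignSet (πn n x), μ (πn n x) (θn n x) * ξ = σn n) :
    ∃ φ : ℕ → ℕ, StrictMono φ ∧
    ∃ (σ0 : ℝ) (θ0 π0 : ℝ → ℝ),
      Measurable θ0 ∧ Measurable π0 ∧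
      (∀ x ∈ Set.Icc (-H) H, θ0 (-x) = θ0 x ∧ π0 (-x) = π0 x) ∧
      MonotoneOn θ0 (Set.Icc 0 H) ∧ AntitoneOn π0 (Set.Icc 0 H) ∧
      Tendsto (fun k => σn (φ k)) atTop (nhds σ0) ∧
      (∀ᵐ x ∂(volume.restrict (Set.Icc (-H) H)),
        Tendsto (fun k => θn (φ k) x) atTop (nhds (θ0 x)) ∧
        Tendsto (fun k => πn (φ k) x) atTop (nhds (π0 x))) ∧
      IntegrableOn π0 (Set.Icc (-H) H) ∧
      (∫ x in (-H)..H, π0 x) = 2 * vinf ∧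
      (∀ᵐ x ∂(volume.restrict (Set.Icc (-H) H)),
        f0 (θ0 x) = π0 x * f1 (θ0 x) ∧
        ∃ ξ ∈ SignSet (π0 x), μ (π0 x) (θ0 x) * ξ = σ0) := by
  have hIcc : Icc 0 H ⊆ Icc (-H) H := Icc_subset_Icc (by linarith) le_rfl
  obtain ⟨C, M, hσC, hπM⟩ := exists_uniform_bounds_of_steady_states hH hμc hμmono hΦsuper
    hΦbound hπc hπnn hπeven hπmono hπint hθbdd hflow
  obtain ⟨φ, hφ, σ0, θ0, π0, hθm, hπm, heven, hθmono0, hπanti0, hbd0, hσlim, hlim⟩ :=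
    exists_subseq_tendsto_of_even_monotone hH.le hσC hθeven hθmono
      (fun n x hx => hθbdd n x (hIcc hx)) hπeven hπmono fun n x hx => hπM n x (hIcc hx)
  have hπ0int : ∫ x in (-H)..H, π0 x = 2 * vinf :=
    tendsto_nhds_unique (tendsto_intervalIntegral_of_ae_tendsto (by linarith)
      (fun k => hπc (φ k)) (fun k x hx => abs_of_nonneg (hπM _ x hx).1 ▸ (hπM _ x hx).2)
      (((ae_restrict_iff' measurableSet_Icc).1 hlim).mono fun x hx hx' => (hx hx').2))
      (by simp only [hπint, tendsto_const_nhds])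
  have haging0 := ae_limit_aging_relation hH.le (hκ0.comp hφ.tendsto_atTop) hf0c hf1c
    (fun k => hθc2 (φ k)) (fun k => hθeven (φ k)) (fun k => hθbdd (φ k)) (fun k => hπc (φ k))
    (fun k => hπM (φ k)) (fun k => haging (φ k)) hlim heven
  refine ⟨φ, hφ, σ0, θ0, π0, hθm, hπm, fun x _ => heven x, hθmono0, hπanti0, hσlim, hlim,
    Integrable.of_bound hπm.aestronglyMeasurable M (ae_of_all _ fun x =>
      (Real.norm_of_nonneg (hbd0 x).2.1).trans_le (hbd0 x).2.2), hπ0int, ?_⟩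
  filter_upwards [haging0, hlim, ae_restrict_mem measurableSet_Icc] with x hx hxlim hxH
  exact ⟨hx, exists_mem_signSet_of_tendsto hxlim.2
    ((hμc.tendsto _).comp (hxlim.2.prodMk_nhds hxlim.1)) hσlim fun k => hflow (φ k) x hxH⟩

/-- pointwise limit of even, monotone steady states as the
aging length scale `κ → 0`.  Given a sequence `κ_n → 0⁺` of even, monotone
steady states `(σ_n, θ_n, π_n)` of the rate-and-state system with superlinear
dissipation, some subsequence converges pointwise a.e. (and `σ_n` in `ℝ`) to an
even, monotone limit `(σ⁰, θ⁰, π⁰)` which satisfies the constraint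
`∫ π⁰ = 2v∞` and, a.e., the limit aging relation `f0(θ⁰) = π⁰·f1(θ⁰)` and the
flow rule `σ⁰ ∈ μ(π⁰,θ⁰)·Sign(π⁰)`. -/
theorem kappa_zero_limit_of_even_monotone_steady_states
    (H θinf vinf : ℝ) (hH : 0 < H) (hθinf : 0 < θinf) (hvinf : 0 < vinf)
    (μ : ℝ → ℝ → ℝ) (hμc : Continuous (fun q : ℝ × ℝ => μ q.1 q.2))
    (hμmono : ∀ t, MonotoneOn (fun p => μ p t) (Set.Ici (0:ℝ)))
    (hμpos : ∃ c > 0, ∀ t, c ≤ μ 0 t)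
    (Φ : ℝ → ℝ) (hΦc : ContinuousOn Φ (Set.Ici 0))
    (hΦnn : ∀ r, 0 ≤ r → 0 ≤ Φ r)
    (hΦsuper : Tendsto (fun r => Φ r / r) atTop atTop)
    (hΦbound : ∀ r, 0 ≤ r → ∀ t : ℝ, Φ r ≤ ∫ s in (0:ℝ)..r, μ s t)
    (f0 f1 : ℝ → ℝ) (hf0c : Continuous f0) (hf1c : Continuous f1)
    (κ : ℕ → ℝ) (hκpos : ∀ n, 0 < κ n) (hκ0 : Tendsto κ atTop (nhds 0))
    (σn : ℕ → ℝ) (θn πn : ℕ → ℝ → ℝ)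
    (hθc2 : ∀ n, ContDiffOn ℝ 2 (θn n) (Set.Icc (-H) H))
    (hπc : ∀ n, ContinuousOn (πn n) (Set.Icc (-H) H))
    (hπnn : ∀ n, ∀ x ∈ Set.Icc (-H) H, 0 ≤ πn n x)
    (hθeven : ∀ n, ∀ x ∈ Set.Icc (-H) H, θn n (-x) = θn n x)
    (hπeven : ∀ n, ∀ x ∈ Set.Icc (-H) H, πn n (-x) = πn n x)
    (hθmono : ∀ n, MonotoneOn (θn n) (Set.Icc 0 H))
    (hθbdd : ∀ n, ∀ x ∈ Set.Icc (-H) H, 0 ≤ θn n x ∧ θn n x ≤ θinf)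
    (hθbcl : ∀ n, θn n (-H) = θinf) (hθbcr : ∀ n, θn n H = θinf)
    (hπmono : ∀ n, AntitoneOn (πn n) (Set.Icc 0 H))
    (hπint : ∀ n, (∫ x in (-H)..H, πn n x) = 2 * vinf)
    (haging : ∀ n, ∀ x ∈ Set.Ioo (-H) H,
      κ n * derivWithin (derivWithin (θn n) (Set.Icc (-H) H)) (Set.Icc (-H) H) x
        = πn n x * f1 (θn n x) - f0 (θn n x))
    (hflow : ∀ n, ∀ x ∈ Set.Icc (-H) H,
      ∃ ξ ∈ SignSet (πn n x), μ (πn n x) (θn n x) * ξ = σn n) :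
    ∃ φ : ℕ → ℕ, StrictMono φ ∧
    ∃ (σ0 : ℝ) (θ0 π0 : ℝ → ℝ),
      Measurable θ0 ∧ Measurable π0 ∧
      (∀ x ∈ Set.Icc (-H) H, θ0 (-x) = θ0 x ∧ π0 (-x) = π0 x) ∧
      MonotoneOn θ0 (Set.Icc 0 H) ∧ AntitoneOn π0 (Set.Icc 0 H) ∧
      Tendsto (fun k => σn (φ k)) atTop (nhds σ0) ∧
      (∀ᵐ x ∂(volume.restrict (Set.Icc (-H) H)),
        Tendsto (fun k => θn (φ k) x) atTop (nhds (θ0 x)) ∧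
        Tendsto (fun k => πn (φ k) x) atTop (nhds (π0 x))) ∧
      IntegrableOn π0 (Set.Icc (-H) H) ∧
      (∫ x in (-H)..H, π0 x) = 2 * vinf ∧
      (∀ᵐ x ∂(volume.restrict (Set.Icc (-H) H)),
        f0 (θ0 x) = π0 x * f1 (θ0 x) ∧
        ∃ ξ ∈ SignSet (π0 x), μ (π0 x) (θ0 x) * ξ = σ0) :=
  kappa_zero_limit_of_even_monotone_steady_states_general H θinf vinf hH μ hμc hμmono Φ hΦsuper
    hΦbound f0 f1 hf0c hf1c κ hκ0 σn θn πn hθc2 hπc hπnn hθeven hπeven hθmono hθbdd hπmono hπint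
    haging hflow
end
end
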